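/- arXiv:1210.5371 — 6 statements merged into one kernel-verified Lean document; each statement's English description precedes it below -/
import Mathlib

section
/- Let b > 2, let D = [[d11,d12],[d12,d22]] be a real symmetric positive definite 2×2 matrix, and let a11 > 0. Then ∫ over {(a12,a22) ∈ ℝ² : a11·a22 − a12² > 0} of (a11·a22 − a12²)^((b−2)/2) · exp(−(1/2)·(d11·a11 + 2·d12·a12 + d22·a22)) d(a12,a22) = (2π/d22)^(1/2) · I₁(b, d22) · a11^((b−1)/2) · exp(−(1/2)·(d11 − d12²/d22)·a11). (That is, the unnormalized 2×2 Wishart W(b,D) density integrated over (a12,a22) with a11 fixed equals J(b,D,a11) := (2π/d22)^(1/2) · I₁(b,d22) · a11^((b−1)/2) · exp(−(1/2)·D_{11.2}·a11), where D_{11.2} := d11 − d12²/d22.) -/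
/-!
Substituting `a22 = t + a12² / a11` is a measure-preserving shear of the `(a12, a22)`-plane
that maps `{a12 ∈ ℝ, t > 0}` onto `{det A > 0}` and turns `det A` into `a11 · t`. The integrand
then factors as a Gaussian in `a12` times the one-dimensional Wishart kernel `W(b, d22)` in `t`,
and completing the square in the Gaussian produces `D_{11.2} = d11 - d12² / d22`.
-/

open MeasureTheory Real

/-- `I₁(b,d) = ∫₀^∞ t^((b−2)/2) · exp(−d·t/2) dt`, the normalizing constant of the
one-dimensional Wishart distribution `W(b,d)`. -/
noncomputable def I1 (b d : ℝ) : ℝ :=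
  ∫ t in Set.Ioi (0 : ℝ), t ^ ((b - 2) / 2) * Real.exp (-(d * t) / 2)

namespace MeasurableEquiv

variable {α : Type*} [MeasurableSpace α] {φ : α → ℝ}

def shear (hφ : Measurable φ) : α × ℝ ≃ᵐ α × ℝ where
  toFun p := (p.1, p.2 + φ p.1)
  invFun p := (p.1, p.2 - φ p.1)
  left_inv p := by simp
  right_inv p := by simp
  measurable_toFun := measurable_fst.prodMk (measurable_snd.add (hφ.comp measurable_fst))
  measurable_invFun := measurable_fst.prodMk (measurable_snd.sub (hφ.comp measurable_fst))

@[simp]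
lemma shear_apply (hφ : Measurable φ) (p : α × ℝ) : shear hφ p = (p.1, p.2 + φ p.1) := rfl

lemma measurePreserving_shear (hφ : Measurable φ) (μ : Measure α) [SFinite μ] :
    MeasurePreserving (shear hφ) (μ.prod volume) (μ.prod volume) :=
  (MeasurePreserving.id μ).skew_product (g := fun x y => y + φ x) (by fun_prop)
    (ae_of_all _ fun x => (measurePreserving_add_right volume (φ x)).map_eq)

end MeasurableEquiv

theorem setIntegral_epigraph_eq_setIntegral_shear {α E : Type*} [MeasurableSpace α]
    [NormedAddCommGroup E] [NormedSpace ℝ E] (μ : Measure α) [SFinite μ] {φ : α → ℝ}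
    (hφ : Measurable φ) (F : α × ℝ → E) :
    ∫ q in {q | φ q.1 < q.2}, F q ∂μ.prod volume
      = ∫ p in Set.univ ×ˢ Set.Ioi 0, F (p.1, p.2 + φ p.1) ∂μ.prod volume := by
  have hpre : MeasurableEquiv.shear hφ ⁻¹' {q | φ q.1 < q.2} = Set.univ ×ˢ Set.Ioi 0 := by
    ext p; simp
  rw [← (MeasurableEquiv.measurePreserving_shear hφ μ).setIntegral_preimage_emb
    (MeasurableEquiv.shear hφ).measurableEmbedding, hpre]
  rfl

theorem integral_exp_neg_quadratic {β : ℝ} (hβ : 0 < β) (γ : ℝ) :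
    ∫ x : ℝ, exp (-(β * x ^ 2 + γ * x)) = √(π / β) * exp (γ ^ 2 / (4 * β)) := by
  have hsq : ∀ x : ℝ, exp (-(β * x ^ 2 + γ * x))
      = exp (γ ^ 2 / (4 * β)) * exp (-β * (x + γ / (2 * β)) ^ 2) := by
    intro x
    rw [← exp_add]
    congr 1
    field_simp
    ring
  simp_rw [hsq]
  rw [integral_const_mul, integral_add_right_eq_self (fun x => exp (-β * x ^ 2)),
    integral_gaussian]
  ring

/-- The unnormalized `W(b, D)` density `det(A)^((b-2)/2) · exp(-tr(DA)/2)` at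
`A = [[a11, a12], [a12, a22]]`. -/
noncomputable def wishartKernel (b d11 d12 d22 a11 a12 a22 : ℝ) : ℝ :=
  (a11 * a22 - a12 ^ 2) ^ ((b - 2) / 2) * exp (-(1 / 2) * (d11 * a11 + 2 * d12 * a12 + d22 * a22))

theorem wishartKernel_shear (b d11 d12 d22 x : ℝ) {a11 t : ℝ} (ha : 0 < a11) (ht : 0 ≤ t) :
    wishartKernel b d11 d12 d22 a11 x (t + x ^ 2 / a11)
      = a11 ^ ((b - 2) / 2) * exp (-(d11 * a11) / 2) * exp (-(d22 / (2 * a11) * x ^ 2 + d12 * x))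
        * (t ^ ((b - 2) / 2) * exp (-(d22 * t) / 2)) := by
  have hdet : a11 * (t + x ^ 2 / a11) - x ^ 2 = a11 * t := by field_simp; ring
  have htr : -(1 / 2) * (d11 * a11 + 2 * d12 * x + d22 * (t + x ^ 2 / a11))
      = -(d11 * a11) / 2 + -(d22 / (2 * a11) * x ^ 2 + d12 * x) + -(d22 * t) / 2 := by
    field_simp; ring
  rw [wishartKernel, hdet, mul_rpow ha.le ht, htr, exp_add, exp_add]
  ring

theorem integral_wishartKernel_shear_fst_factor (b d11 d12 : ℝ) {d22 a11 : ℝ} (hd22 : 0 < d22)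
    (ha : 0 < a11) :
    ∫ x, a11 ^ ((b - 2) / 2) * exp (-(d11 * a11) / 2) * exp (-(d22 / (2 * a11) * x ^ 2 + d12 * x))
      = (2 * π / d22) ^ ((1 : ℝ) / 2) * a11 ^ ((b - 1) / 2)
          * exp (-(1 / 2) * (d11 - d12 ^ 2 / d22) * a11) := by
  have hsqrt : √(π / (d22 / (2 * a11)))
      = (2 * π / d22) ^ ((1 : ℝ) / 2) * a11 ^ ((1 : ℝ) / 2) := by
    rw [sqrt_eq_rpow, ← mul_rpow (by positivity) ha.le]
    field_simp
  have hpow : a11 ^ ((b - 2) / 2) * a11 ^ ((1 : ℝ) / 2) = a11 ^ ((b - 1) / 2) := by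
    rw [← rpow_add ha]
    ring_nf
  have hexp : exp (-(d11 * a11) / 2) * exp (d12 ^ 2 / (4 * (d22 / (2 * a11))))
      = exp (-(1 / 2) * (d11 - d12 ^ 2 / d22) * a11) := by
    rw [← exp_add]
    congr 1
    field_simp
    ring
  rw [integral_const_mul, integral_exp_neg_quadratic (by positivity), hsqrt, ← hpow, ← hexp]
  ring

theorem wishart_2x2_cond_normalizing_constant_general
    (b d11 d12 d22 a11 : ℝ)
    (hD : (!![d11, d12; d12, d22] : Matrix (Fin 2) (Fin 2) ℝ).PosDef)
    (ha : 0 < a11) :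
    (∫ q in {q : ℝ × ℝ | 0 < a11 * q.2 - q.1 ^ 2},
        (a11 * q.2 - q.1 ^ 2) ^ ((b - 2) / 2) *
          Real.exp (-(1 / 2) * (d11 * a11 + 2 * d12 * q.1 + d22 * q.2)))
      = (2 * π / d22) ^ ((1 : ℝ) / 2) * I1 b d22 * a11 ^ ((b - 1) / 2) *
          Real.exp (-(1 / 2) * (d11 - d12 ^ 2 / d22) * a11) := by
  have hd22 : 0 < d22 := by simpa using hD.diag_pos (i := 1)
  have hregion : {q : ℝ × ℝ | 0 < a11 * q.2 - q.1 ^ 2} = {q | q.1 ^ 2 / a11 < q.2} := by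
    ext q
    simp [div_lt_iff₀ ha, mul_comm]
  set G : ℝ → ℝ := fun x =>
    a11 ^ ((b - 2) / 2) * exp (-(d11 * a11) / 2) * exp (-(d22 / (2 * a11) * x ^ 2 + d12 * x))
  set H : ℝ → ℝ := fun t => t ^ ((b - 2) / 2) * exp (-(d22 * t) / 2)
  calc _ = ∫ q in {q : ℝ × ℝ | q.1 ^ 2 / a11 < q.2}, wishartKernel b d11 d12 d22 a11 q.1 q.2
          ∂volume.prod volume := by rw [hregion, Measure.volume_eq_prod]; rfl
    _ = ∫ p in Set.univ ×ˢ Set.Ioi 0, G p.1 * H p.2 ∂volume.prod volume := by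
      rw [setIntegral_epigraph_eq_setIntegral_shear volume (φ := fun x => x ^ 2 / a11)
        (by fun_prop)]
      exact setIntegral_congr_fun (MeasurableSet.univ.prod measurableSet_Ioi)
        fun p hp => wishartKernel_shear b d11 d12 d22 p.1 ha (Set.mem_prod.1 hp).2.le
    _ = (∫ x, G x) * I1 b d22 := by rw [setIntegral_prod_mul G H, setIntegral_univ]; rfl
    _ = _ := by
      rw [integral_wishartKernel_shear_fst_factor b d11 d12 hd22 ha]
      ring

/-- The unnormalized 2×2 Wishart `W(b,D)` density integrated over `(a12, a22)` with
`a11` fixed equals `J(b,D,a11) = (2π/d22)^(1/2) · I₁(b,d22) · a11^((b−1)/2) ·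
exp(−(1/2)·(d11 − d12²/d22)·a11)`. -/
theorem wishart_2x2_cond_normalizing_constant
    (b d11 d12 d22 a11 : ℝ) (hb : 2 < b)
    (hD : (!![d11, d12; d12, d22] : Matrix (Fin 2) (Fin 2) ℝ).PosDef)
    (ha : 0 < a11) :
    (∫ q in {q : ℝ × ℝ | 0 < a11 * q.2 - q.1 ^ 2},
        (a11 * q.2 - q.1 ^ 2) ^ ((b - 2) / 2) *
          Real.exp (-(1 / 2) * (d11 * a11 + 2 * d12 * q.1 + d22 * q.2)))
      = (2 * π / d22) ^ ((1 : ℝ) / 2) * I1 b d22 * a11 ^ ((b - 1) / 2) *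
          Real.exp (-(1 / 2) * (d11 - d12 ^ 2 / d22) * a11) :=
  wishart_2x2_cond_normalizing_constant_general b d11 d12 d22 a11 hD ha
end

section
/- Let b > 2 and let D = [[d11,d12],[d12,d22]] be a real symmetric positive definite 2×2 matrix. Define the 2×2 Wishart normalizing constant I₂(b,D) := ∫ over {(a11,a12,a22) ∈ ℝ³ : a11 > 0 and a11·a22 − a12² > 0} of (a11·a22 − a12²)^((b−2)/2) · exp(−(1/2)·(d11·a11 + 2·d12·a12 + d22·a22)) d(a11,a12,a22). Then I₂(b,D) = (2π/d22)^(1/2) · I₁(b, d22) · I₁(b+1, d11 − d12²/d22). -/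
/-!
With `c = d12 / d22`, substitute `a11 = t`, `a12 = √t (z - c√t)`, `a22 = u + (z - c√t)²`.
This maps `{t > 0, u > 0}` bijectively onto the cone of positive definite matrices, with Jacobian
`√t`; `u` is the Schur complement `a22 - a12² / a11`, so `det A = t u`, and completing the square
makes the trace `(d11 - d12² / d22) t + d22 z² + d22 u`. The integrand then splits into a product:
a one-dimensional Wishart integral in `t` (the Jacobian raises `b` to `b + 1`), a Gaussian in `z`
and a one-dimensional Wishart integral in `u`.
-/

open MeasureTheory Real

open Set

noncomputable def tripleEquivFinThree : (ℝ × ℝ × ℝ) ≃ₗ[ℝ] (Fin 3 → ℝ) where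
  toFun v := ![v.1, v.2.1, v.2.2]
  invFun w := (w 0, w 1, w 2)
  map_add' v w := by ext i; fin_cases i <;> simp
  map_smul' r v := by ext i; fin_cases i <;> simp
  left_inv v := by simp
  right_inv w := by ext i; fin_cases i <;> simp

noncomputable def lowerTriangularCLM (a b c d : ℝ) : (ℝ × ℝ × ℝ) →L[ℝ] ℝ × ℝ × ℝ :=
  LinearMap.toContinuousLinearMap
    { toFun := fun v => (v.1, a * v.1 + b * v.2.1, c * v.1 + d * v.2.1 + v.2.2)
      map_add' := fun v w => by ext <;> simp only [Prod.fst_add, Prod.snd_add] <;> ring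
      map_smul' := fun r v => by
        ext <;> simp only [Prod.smul_fst, Prod.smul_snd, smul_eq_mul, RingHom.id_apply] <;> ring }

@[simp] theorem lowerTriangularCLM_apply (a b c d : ℝ) (v : ℝ × ℝ × ℝ) :
    lowerTriangularCLM a b c d v = (v.1, a * v.1 + b * v.2.1, c * v.1 + d * v.2.1 + v.2.2) :=
  rfl

theorem det_lowerTriangularCLM (a b c d : ℝ) : (lowerTriangularCLM a b c d).det = b := by
  let L : (ℝ × ℝ × ℝ) →ₗ[ℝ] ℝ × ℝ × ℝ := lowerTriangularCLM a b c d
  let e := tripleEquivFinThree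
  have hmatrix : LinearMap.toMatrix' (↑e ∘ₗ L ∘ₗ ↑e.symm) = !![1, 0, 0; a, b, 0; c, d, 1] := by
    ext i j
    fin_cases i <;> fin_cases j <;> simp [L, e, LinearMap.toMatrix'_apply, tripleEquivFinThree]
  rw [ContinuousLinearMap.det, ← LinearMap.det_conj L e, ← LinearMap.det_toMatrix', hmatrix,
    Matrix.det_fin_three]
  simp

noncomputable def schurSubst (c : ℝ) (x : ℝ × ℝ × ℝ) : ℝ × ℝ × ℝ :=
  (x.1, √x.1 * (x.2.1 - c * √x.1), x.2.2 + (x.2.1 - c * √x.1) ^ 2)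

theorem schurSubst_det (c : ℝ) {x : ℝ × ℝ × ℝ} (hx : 0 ≤ x.1) :
    let q := schurSubst c x
    q.1 * q.2.2 - q.2.1 ^ 2 = x.1 * x.2.2 := by
  have hst : √x.1 ^ 2 = x.1 := sq_sqrt hx
  simp only [schurSubst]
  linear_combination -(x.2.1 - c * √x.1) ^ 2 * hst

theorem schurSubst_trace (d11 d12 d22 : ℝ) (hd22 : d22 ≠ 0) {x : ℝ × ℝ × ℝ} (hx : 0 ≤ x.1) :
    let q := schurSubst (d12 / d22) x
    d11 * q.1 + 2 * d12 * q.2.1 + d22 * q.2.2 =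
      (d11 - d12 ^ 2 / d22) * x.1 + d22 * x.2.1 ^ 2 + d22 * x.2.2 := by
  have hst : √x.1 ^ 2 = x.1 := sq_sqrt hx
  have hc : d22 * (d12 / d22) = d12 := mul_div_cancel₀ d12 hd22
  simp only [schurSubst]
  rw [show d12 ^ 2 / d22 = d12 * (d12 / d22) by ring]
  linear_combination (d12 / d22 * √x.1 ^ 2 - 2 * √x.1 * x.2.1) * hc - d12 * (d12 / d22) * hst

theorem hasFDerivAt_schurSubst (c : ℝ) {x : ℝ × ℝ × ℝ} (hx : 0 < x.1) :
    HasFDerivAt (schurSubst c)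
      (lowerTriangularCLM (x.2.1 / (2 * √x.1) - c) (√x.1)
        (c ^ 2 - c * x.2.1 / √x.1) (2 * (x.2.1 - c * √x.1))) x := by
  have ht := hasFDerivAt_fst (𝕜 := ℝ) (p := x)
  have hz := (hasFDerivAt_snd (𝕜 := ℝ) (p := x)).fst
  have hu := (hasFDerivAt_snd (𝕜 := ℝ) (p := x)).snd
  have hs := (hasDerivAt_sqrt hx.ne').comp_hasFDerivAt x ht
  have hy := hz.sub (hs.const_mul c)
  refine (ht.prodMk ((hs.mul hy).prodMk (hu.add (hy.pow 2)))).congr_fderiv ?_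
  have hsqrt : √x.1 ≠ 0 := (sqrt_pos.2 hx).ne'
  ext <;>
    simp only [Function.comp_apply, Pi.sub_apply, ContinuousLinearMap.comp_apply,
      ContinuousLinearMap.inl_apply, ContinuousLinearMap.inr_apply, ContinuousLinearMap.prod_apply,
      ContinuousLinearMap.coe_fst', ContinuousLinearMap.coe_snd', add_apply,
      smul_apply, sub_apply, Prod.fst_zero, Prod.snd_zero,
      smul_eq_mul, nsmul_eq_mul, lowerTriangularCLM_apply] <;>
    field_simp <;> ring

theorem injOn_schurSubst (c : ℝ) : InjOn (schurSubst c) (Ioi 0 ×ˢ (univ ×ˢ Ioi 0)) := by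
  rintro ⟨t, z, u⟩ ⟨ht, -⟩ ⟨t', z', u'⟩ - h
  simp only [schurSubst, Prod.mk.injEq] at h ht
  obtain ⟨rfl, hy, hu⟩ := h
  have hz : z = z' := by
    simpa using mul_left_cancel₀ (sqrt_pos.2 ht).ne' hy
  subst hz
  simp_all

theorem image_schurSubst (c : ℝ) :
    schurSubst c '' (Ioi 0 ×ˢ (univ ×ˢ Ioi 0)) =
      {q : ℝ × ℝ × ℝ | 0 < q.1 ∧ 0 < q.1 * q.2.2 - q.2.1 ^ 2} := by
  ext ⟨t, a, v⟩
  simp only [mem_image, mem_prod, mem_Ioi, mem_univ, true_and, mem_ofPred_eq, Prod.exists]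
  constructor
  · rintro ⟨t, z, u, ⟨ht, hu⟩, h⟩
    have hdet := schurSubst_det c (x := (t, z, u)) ht.le
    rw [h] at hdet
    obtain ⟨rfl, -⟩ := Prod.mk.inj h
    exact ⟨ht, hdet ▸ mul_pos ht hu⟩
  · rintro ⟨ht, hdet⟩
    have hs : √t ≠ 0 := (sqrt_pos.2 ht).ne'
    have hst : √t ^ 2 = t := sq_sqrt ht.le
    refine ⟨t, a / √t + c * √t, v - a ^ 2 / t, ⟨ht, ?_⟩, ?_⟩
    · rw [sub_pos, div_lt_iff₀ ht]; linarith
    · simp only [schurSubst, Prod.mk.injEq, add_sub_cancel_right, true_and]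
      constructor
      · field_simp
      · rw [div_pow, hst]; ring

theorem integral_posDefCone_eq_integral_schurSubst (c : ℝ) (f : ℝ × ℝ × ℝ → ℝ) :
    ∫ q in {q : ℝ × ℝ × ℝ | 0 < q.1 ∧ 0 < q.1 * q.2.2 - q.2.1 ^ 2}, f q =
      ∫ x in Ioi 0 ×ˢ (univ ×ˢ Ioi 0), √x.1 * f (schurSubst c x) := by
  have : (volume : Measure (ℝ × ℝ)).IsAddHaarMeasure := Measure.prod.instIsAddHaarMeasure _ _
  have : (volume : Measure (ℝ × ℝ × ℝ)).IsAddHaarMeasure :=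
    Measure.prod.instIsAddHaarMeasure _ _
  have hmeas : MeasurableSet (Ioi (0 : ℝ) ×ˢ ((univ : Set ℝ) ×ˢ Ioi (0 : ℝ))) :=
    measurableSet_Ioi.prod (MeasurableSet.univ.prod measurableSet_Ioi)
  rw [← image_schurSubst c, integral_image_eq_integral_abs_det_fderiv_smul volume hmeas
    (fun x hx => (hasFDerivAt_schurSubst c hx.1).hasFDerivWithinAt) (injOn_schurSubst c)]
  simp only [det_lowerTriangularCLM, abs_of_nonneg (sqrt_nonneg _), smul_eq_mul]

theorem setIntegral_prod_prod_mul {α β γ : Type*} [MeasurableSpace α] [MeasurableSpace β]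
    [MeasurableSpace γ] {μ : Measure α} {ν : Measure β} {ρ : Measure γ} [SFinite μ] [SFinite ν]
    [SFinite ρ] {L : Type*} [RCLike L] (f : α → L) (g : β → L) (h : γ → L)
    (s : Set α) (t : Set β) (u : Set γ) :
    ∫ x in s ×ˢ (t ×ˢ u), f x.1 * (g x.2.1 * h x.2.2) ∂μ.prod (ν.prod ρ) =
      (∫ x in s, f x ∂μ) * (∫ y in t, g y ∂ν) * ∫ z in u, h z ∂ρ := by
  rw [setIntegral_prod_mul f (fun y : β × γ => g y.1 * h y.2), setIntegral_prod_mul, mul_assoc]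

theorem integral_exp_neg_half_mul_sq (d : ℝ) :
    ∫ z, exp (-(d / 2) * z ^ 2) = (2 * π / d) ^ ((1 : ℝ) / 2) := by
  rw [integral_gaussian, sqrt_eq_rpow, div_div_eq_mul_div, mul_comm π]

theorem sqrt_mul_wishartIntegrand_schurSubst (b d11 d12 d22 : ℝ) (hd22 : d22 ≠ 0)
    {x : ℝ × ℝ × ℝ} (hx : x ∈ Ioi (0 : ℝ) ×ˢ ((univ : Set ℝ) ×ˢ Ioi (0 : ℝ))) :
    let q := schurSubst (d12 / d22) x
    √x.1 * ((q.1 * q.2.2 - q.2.1 ^ 2) ^ ((b - 2) / 2) *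
        exp (-(1 / 2) * (d11 * q.1 + 2 * d12 * q.2.1 + d22 * q.2.2))) =
      (x.1 ^ ((b + 1 - 2) / 2) * exp (-((d11 - d12 ^ 2 / d22) * x.1) / 2)) *
        (exp (-(d22 / 2) * x.2.1 ^ 2) * (x.2.2 ^ ((b - 2) / 2) * exp (-(d22 * x.2.2) / 2))) := by
  obtain ⟨t, z, u⟩ := x
  obtain ⟨ht, -, hu⟩ := hx
  simp only [mem_Ioi] at ht hu
  have hpow : √t * t ^ ((b - 2) / 2) = t ^ ((b + 1 - 2) / 2) := by
    rw [sqrt_eq_rpow, ← rpow_add ht]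
    congr 1
    ring
  have hexp : exp (-(1 / 2) * ((d11 - d12 ^ 2 / d22) * t + d22 * z ^ 2 + d22 * u)) =
      exp (-((d11 - d12 ^ 2 / d22) * t) / 2) *
        (exp (-(d22 / 2) * z ^ 2) * exp (-(d22 * u) / 2)) := by
    rw [← exp_add, ← exp_add]
    congr 1
    ring
  dsimp only
  rw [schurSubst_det _ ht.le, schurSubst_trace d11 d12 d22 hd22 ht.le, hexp, mul_rpow ht.le hu.le, ← hpow]
  ring

theorem wishart_2x2_normalizing_constant_general
    (b d11 d12 d22 : ℝ)
    (hD : (!![d11, d12; d12, d22] : Matrix (Fin 2) (Fin 2) ℝ).PosDef) :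
    (∫ q in {q : ℝ × ℝ × ℝ | 0 < q.1 ∧ 0 < q.1 * q.2.2 - q.2.1 ^ 2},
        (q.1 * q.2.2 - q.2.1 ^ 2) ^ ((b - 2) / 2) *
          Real.exp (-(1 / 2) * (d11 * q.1 + 2 * d12 * q.2.1 + d22 * q.2.2)))
      = (2 * π / d22) ^ ((1 : ℝ) / 2) * I1 b d22 * I1 (b + 1) (d11 - d12 ^ 2 / d22) := by
  have hd22 : d22 ≠ 0 := by
    simpa using (hD.diag_pos (i := 1)).ne'
  rw [integral_posDefCone_eq_integral_schurSubst (d12 / d22),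
    setIntegral_congr_fun (measurableSet_Ioi.prod (MeasurableSet.univ.prod measurableSet_Ioi))
      (fun x hx => sqrt_mul_wishartIntegrand_schurSubst b d11 d12 d22 hd22 hx),
    Measure.volume_eq_prod, Measure.volume_eq_prod,
    setIntegral_prod_prod_mul (fun t ↦ t ^ ((b + 1 - 2) / 2) * exp (-((d11 - d12 ^ 2 / d22) * t) / 2))
      (fun z ↦ exp (-(d22 / 2) * z ^ 2)) (fun u ↦ u ^ ((b - 2) / 2) * exp (-(d22 * u) / 2)),
    Measure.restrict_univ, integral_exp_neg_half_mul_sq, I1, I1]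
  ring

/-- The 2×2 Wishart normalizing constant `I₂(b,D)` factors as
`(2π/d22)^(1/2) · I₁(b, d22) · I₁(b+1, d11 − d12²/d22)`. -/
theorem wishart_2x2_normalizing_constant
    (b d11 d12 d22 : ℝ) (hb : 2 < b)
    (hD : (!![d11, d12; d12, d22] : Matrix (Fin 2) (Fin 2) ℝ).PosDef) :
    (∫ q in {q : ℝ × ℝ × ℝ | 0 < q.1 ∧ 0 < q.1 * q.2.2 - q.2.1 ^ 2},
        (q.1 * q.2.2 - q.2.1 ^ 2) ^ ((b - 2) / 2) *
          Real.exp (-(1 / 2) * (d11 * q.1 + 2 * d12 * q.2.1 + d22 * q.2.2)))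
      = (2 * π / d22) ^ ((1 : ℝ) / 2) * I1 b d22 * I1 (b + 1) (d11 - d12 ^ 2 / d22) :=
  wishart_2x2_normalizing_constant_general b d11 d12 d22 hD
end

section
/- Let p ≥ 2, b > 2, let D be a real symmetric positive definite p×p matrix with entry d_{jj} > 0, and fix j ∈ V = {1,…,p}. For t ∈ ℝ let K(t) be a symmetric p×p matrix whose entries are all fixed except the (j,j) entry, which equals t; assume the submatrix K_{V∖{j},V∖{j}} (independent of t) is positive definite. Let c := K_{j,V∖{j}} · (K_{V∖{j},V∖{j}})^{−1} · K_{V∖{j},j} and let K⁰ := K(c). Then: (a) K(t) is positive definite if and only if t > c; and (b) ∫_c^∞ det(K(t))^((b−2)/2) · exp(−(1/2)·tr(D·K(t))) dt = I₁(b, d_{jj}) · det(K⁰_{V∖{j},V∖{j}})^((b−2)/2) · exp(−(1/2)·tr(D·K⁰)). -/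
open MeasureTheory Matrix Real

/-!
Splitting off the index `j` writes `K(t)` as a `2 × 2` block matrix in which the Schur
complement of the block `K_{V∖j,V∖j}` is the scalar `t - c`. Hence
`det K(t) = det K_{V∖j,V∖j} · (t - c)`, and, `K_{V∖j,V∖j}` being positive definite, `K(t)` is
positive semidefinite iff `t ≥ c` and nonsingular iff `t ≠ c`. Since `tr (D K(t))` is affine
in `t` with slope `d_jj`, the substitution `s = t - c` turns the integral into
`det K_{V∖j,V∖j}^((b-2)/2) · exp (-tr (D K⁰) / 2)` times the integral defining `I₁(b, d_jj)`.
-/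

def Equiv.sumUnitSubtypeNe {n : Type*} [DecidableEq n] (j : n) : {x // x ≠ j} ⊕ Unit ≃ n :=
  (Equiv.optionEquivSumPUnit _).symm.trans (Equiv.optionSubtypeNe j)

namespace Matrix

variable {n R : Type*} [DecidableEq n]

def updateDiagEntry (K : Matrix n n R) (j : n) (t : R) : Matrix n n R :=
  fun l m => if l = j ∧ m = j then t else K l m

def submatrixNe (K : Matrix n n R) (j : n) : Matrix {x // x ≠ j} {x // x ≠ j} R :=
  K.submatrix (↑) (↑)

theorem updateDiagEntry_eq_submatrix_fromBlocks (K : Matrix n n R) (j : n) (t : R) :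
    K.updateDiagEntry j t =
      (fromBlocks (K.submatrixNe j) (of fun x _ => K x j) (of fun _ x => K j x)
        (of fun _ _ => t)).submatrix (Equiv.sumUnitSubtypeNe j).symm
          (Equiv.sumUnitSubtypeNe j).symm := by
  ext l m
  by_cases hl : l = j <;> by_cases hm : m = j <;>
    simp [updateDiagEntry, submatrixNe, Equiv.sumUnitSubtypeNe, hl, hm]

theorem submatrixNe_updateDiagEntry (K : Matrix n n R) (j : n) (t : R) :
    (K.updateDiagEntry j t).submatrixNe j = K.submatrixNe j := by
  ext x y
  simp [updateDiagEntry, submatrixNe, x.2]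

theorem updateDiagEntry_eq_add_single [AddCommGroup R] (K : Matrix n n R) (j : n) (s t : R) :
    K.updateDiagEntry j t = K.updateDiagEntry j s + single j j (t - s) := by
  ext l m
  by_cases hl : l = j <;> by_cases hm : m = j <;>
    simp [updateDiagEntry, single, hl, hm, Ne.symm]

variable [Fintype n]

theorem trace_mul_updateDiagEntry [CommRing R] (D K : Matrix n n R) (j : n) (s t : R) :
    (D * K.updateDiagEntry j t).trace = (D * K.updateDiagEntry j s).trace + D j j * (t - s) := by
  rw [updateDiagEntry_eq_add_single K j s t, Matrix.mul_add, trace_add, trace_mul_single]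
  simp

/-- The paper's `c = K_{j,V∖j} (K_{V∖j,V∖j})⁻¹ K_{V∖j,j}`. -/
noncomputable def diagThreshold [CommRing R] (K : Matrix n n R) (j : n) : R :=
  (fun x : {x // x ≠ j} => K j x) ⬝ᵥ ((K.submatrixNe j)⁻¹ *ᵥ fun x => K x j)

theorem schur_updateDiagEntry [CommRing R] (K : Matrix n n R) (j : n) (t : R) :
    (of fun _ _ => t : Matrix Unit Unit R) -
        (of fun _ x => K j x : Matrix Unit {x // x ≠ j} R) * (K.submatrixNe j)⁻¹ *
          (of fun x _ => K x j : Matrix {x // x ≠ j} Unit R)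
      = diagonal fun _ => t - K.diagThreshold j := by
  ext ⟨⟩ ⟨⟩
  simp only [sub_apply, of_apply, diagonal_apply_eq, diagThreshold, mul_apply, dotProduct,
    mulVec, Finset.mul_sum, Finset.sum_mul, mul_assoc]
  rw [Finset.sum_comm]

theorem det_updateDiagEntry [CommRing R] (K : Matrix n n R) (j : n)
    (hK : IsUnit (K.submatrixNe j).det) (t : R) :
    (K.updateDiagEntry j t).det = (K.submatrixNe j).det * (t - K.diagThreshold j) := by
  have := (K.submatrixNe j).invertibleOfIsUnitDet hK
  rw [updateDiagEntry_eq_submatrix_fromBlocks, det_submatrix_equiv_self, det_fromBlocks₁₁,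
    invOf_eq_nonsing_inv, schur_updateDiagEntry, det_diagonal, Finset.prod_const,
    Finset.card_univ, Fintype.card_unit, pow_one]

theorem posDef_updateDiagEntry_iff (K : Matrix n n ℝ) (j : n) (hK : K.IsSymm)
    (hA : (K.submatrixNe j).PosDef) (t : ℝ) :
    (K.updateDiagEntry j t).PosDef ↔ K.diagThreshold j < t := by
  have := hA.isUnit.invertible
  have hrow : (of fun _ x => K j x : Matrix Unit {x // x ≠ j} ℝ) =
      (of fun x _ => K x j : Matrix {x // x ≠ j} Unit ℝ)ᴴ := by
    ext; simp [hK.apply]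
  have hpsd : (K.updateDiagEntry j t).PosSemidef ↔ K.diagThreshold j ≤ t := by
    rw [updateDiagEntry_eq_submatrix_fromBlocks, posSemidef_submatrix_equiv, hrow,
      PosDef.fromBlocks₁₁ _ _ hA, ← hrow, schur_updateDiagEntry, posSemidef_diagonal_iff]
    simp
  have hdet : (K.updateDiagEntry j t).det ≠ 0 ↔ t ≠ K.diagThreshold j := by
    rw [det_updateDiagEntry K j (isUnit_iff_ne_zero.2 hA.det_pos.ne'), mul_ne_zero_iff,
      sub_ne_zero, and_iff_right hA.det_pos.ne']
  constructor
  · intro h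
    exact lt_of_le_of_ne (hpsd.1 h.posSemidef) (hdet.1 h.det_pos.ne').symm
  · intro h
    exact (hpsd.2 h.le).posDef_iff_det_ne_zero.2 (hdet.2 h.ne')

end Matrix

theorem setIntegral_Ioi_comp_sub {E : Type*} [NormedAddCommGroup E] [NormedSpace ℝ E]
    (f : ℝ → E) (c : ℝ) :
    ∫ t in Set.Ioi c, f (t - c) = ∫ t in Set.Ioi 0, f t := by
  simpa [Set.preimage_sub_const_Ioi] using
    (measurePreserving_sub_right volume c).setIntegral_preimage_emb
      (measurableEmbedding_subRight c) f (Set.Ioi 0)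

theorem integral_Ioi_rpow_mul_exp_eq_I1 (b d a T c : ℝ) (ha : 0 ≤ a) :
    ∫ t in Set.Ioi c, (a * (t - c)) ^ ((b - 2) / 2) * exp (-(1 / 2) * (T + d * (t - c)))
      = I1 b d * a ^ ((b - 2) / 2) * exp (-(1 / 2) * T) := by
  rw [setIntegral_Ioi_comp_sub (fun s => (a * s) ^ ((b - 2) / 2) * exp (-(1 / 2) * (T + d * s))),
    I1, mul_assoc, mul_comm, ← integral_const_mul]
  refine setIntegral_congr_fun measurableSet_Ioi fun s hs => ?_
  rw [mul_rpow ha hs.le, mul_add, exp_add]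
  ring_nf

theorem gwishart_integrate_out_diagonal_general (p : ℕ)
    (b : ℝ)
    (D : Matrix (Fin p) (Fin p) ℝ)
    (j : Fin p) (K : Matrix (Fin p) (Fin p) ℝ) (hKsymm : K.IsSymm)
    (hKsub : (K.submatrix (fun x : {x : Fin p // x ≠ j} => x.val)
      (fun x : {x : Fin p // x ≠ j} => x.val)).PosDef) :
    let Vj : {x : Fin p // x ≠ j} → Fin p := Subtype.val
    let Kt : ℝ → Matrix (Fin p) (Fin p) ℝ :=
      fun t l m => if l = j ∧ m = j then t else K l m
    let c : ℝ := (fun x : {x : Fin p // x ≠ j} => K j x.val) ⬝ᵥ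
      ((K.submatrix Vj Vj)⁻¹ *ᵥ fun x : {x : Fin p // x ≠ j} => K x.val j)
    (∀ t : ℝ, (Kt t).PosDef ↔ c < t) ∧
      (∫ t in Set.Ioi c,
          (Kt t).det ^ ((b - 2) / 2) * Real.exp (-(1 / 2) * (D * Kt t).trace))
        = I1 b (D j j) *
            ((Kt c).submatrix Vj Vj).det ^ ((b - 2) / 2) *
            Real.exp (-(1 / 2) * (D * Kt c).trace) := by
  change (K.submatrixNe j).PosDef at hKsub
  change (∀ t, (K.updateDiagEntry j t).PosDef ↔ K.diagThreshold j < t) ∧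
    ∫ t in Set.Ioi (K.diagThreshold j), (K.updateDiagEntry j t).det ^ ((b - 2) / 2) *
        exp (-(1 / 2) * (D * K.updateDiagEntry j t).trace)
      = I1 b (D j j) *
        ((K.updateDiagEntry j (K.diagThreshold j)).submatrixNe j).det ^ ((b - 2) / 2) *
        exp (-(1 / 2) * (D * K.updateDiagEntry j (K.diagThreshold j)).trace)
  refine ⟨K.posDef_updateDiagEntry_iff j hKsymm hKsub, ?_⟩
  have hdet_pos := hKsub.det_pos
  rw [submatrixNe_updateDiagEntry, ← integral_Ioi_rpow_mul_exp_eq_I1 b (D j j) _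
    (D * K.updateDiagEntry j (K.diagThreshold j)).trace _ hdet_pos.le]
  refine setIntegral_congr_fun measurableSet_Ioi fun t _ => ?_
  rw [K.det_updateDiagEntry j (isUnit_iff_ne_zero.2 hdet_pos.ne'), trace_mul_updateDiagEntry]

/-- Integrating the `(j,j)` entry out of the G-Wishart density: with all other entries
of the symmetric matrix `K(t)` fixed, `K(t)` is positive definite iff `t > c` where
`c = K_{j,V∖{j}} (K_{V∖{j},V∖{j}})⁻¹ K_{V∖{j},j}`, and
`∫_c^∞ det(K(t))^((b−2)/2) exp(−tr(D·K(t))/2) dt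
  = I₁(b, d_{jj}) · det(K⁰_{V∖{j},V∖{j}})^((b−2)/2) · exp(−tr(D·K⁰)/2)`,
where `K⁰ = K(c)`. -/
theorem gwishart_integrate_out_diagonal (p : ℕ) (hp : 2 ≤ p)
    (b : ℝ) (hb : 2 < b)
    (D : Matrix (Fin p) (Fin p) ℝ) (hD : D.PosDef)
    (j : Fin p) (K : Matrix (Fin p) (Fin p) ℝ) (hKsymm : K.IsSymm)
    (hKsub : (K.submatrix (fun x : {x : Fin p // x ≠ j} => x.val)
      (fun x : {x : Fin p // x ≠ j} => x.val)).PosDef) :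
    let Vj : {x : Fin p // x ≠ j} → Fin p := Subtype.val
    let Kt : ℝ → Matrix (Fin p) (Fin p) ℝ :=
      fun t l m => if l = j ∧ m = j then t else K l m
    let c : ℝ := (fun x : {x : Fin p // x ≠ j} => K j x.val) ⬝ᵥ
      ((K.submatrix Vj Vj)⁻¹ *ᵥ fun x : {x : Fin p // x ≠ j} => K x.val j)
    (∀ t : ℝ, (Kt t).PosDef ↔ c < t) ∧
      (∫ t in Set.Ioi c,
          (Kt t).det ^ ((b - 2) / 2) * Real.exp (-(1 / 2) * (D * Kt t).trace))
        = I1 b (D j j) *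
            ((Kt c).submatrix Vj Vj).det ^ ((b - 2) / 2) *
            Real.exp (-(1 / 2) * (D * Kt c).trace) :=
  gwishart_integrate_out_diagonal_general p b D j K hKsymm hKsub
end

section
/- Let p ≥ 3, b > 2, let D be a real symmetric positive definite p×p matrix, and let i ≠ j in V = {1,…,p}, e = {i,j}. For (s,t) ∈ ℝ² let K(s,t) be a symmetric p×p matrix whose entries are all fixed except the (i,j) and (j,i) entries, which equal s, and the (j,j) entry, which equals t; assume K_{V∖e,V∖e} is positive definite and k_{ii} − k¹_{ii} > 0, where K¹_{ee} := K_{e,V∖e} · (K_{V∖e,V∖e})^{−1} · K_{V∖e,e} and k¹_{ii} is its (i,i) entry. Let K¹ denote the matrix K with its e×e block (entries (i,i), (i,j), (j,i), (j,j)) replaced by K¹_{ee}. Then ∫∫ over {(s,t) ∈ ℝ² : K(s,t) is positive definite} of det(K(s,t))^((b−2)/2) · exp(−(1/2)·tr(D·K(s,t))) ds dt = (2π/d_{jj})^(1/2) · I₁(b, d_{jj}) · (k_{ii} − k¹_{ii})^((b−1)/2) · exp(−(1/2)·(d_{ii} − d_{ij}²/d_{jj})·(k_{ii} − k¹_{ii}))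 · det(K_{V∖e,V∖e})^((b−2)/2) · exp(−(1/2)·tr(D·K¹)). -/
open MeasureTheory Matrix Real

/-!
After reordering the indices as `e ⊔ (V ∖ e)`, the Schur complement of `K_{V∖e,V∖e}` in
`K(s,t)` is the `2 × 2` matrix `[[a, s - c₁], [s - c₁, t - c₂]]` with `a = k_ii - k¹_ii`,
`c₁ = k¹_ij`, `c₂ = k¹_jj`. Hence `det K(s,t) = det K_{V∖e,V∖e} · (a (t - c₂) - (s - c₁)²)`,
`K(s,t)` is positive definite iff this last factor is positive, and `tr(D K(s,t))` differs from
`tr(D K¹)` by an affine function of `(s, t)`. The remaining integral over the interior of a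
parabola is computed with the measure-preserving shear `(s, u) ↦ (s + c₁, u + c₂ + s² / a)`,
which turns it into a product of a Gaussian integral in `s` and the integral `I₁` in `u`.
-/

theorem integral_exp_neg_mul_sq_sub_mul {β : ℝ} (hβ : 0 < β) (c : ℝ) :
    ∫ x, exp (-(c * x) - β * x ^ 2) = exp (c ^ 2 / (4 * β)) * √(π / β) := by
  have hsq (x : ℝ) : exp (-(c * x) - β * x ^ 2) =
      exp (c ^ 2 / (4 * β)) * exp (-β * (x + c / (2 * β)) ^ 2) := by
    rw [← exp_add]; congr 1; field_simp; ring
  simp_rw [hsq]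
  rw [integral_const_mul, integral_add_right_eq_self (fun x => exp (-β * x ^ 2)),
    integral_gaussian]

noncomputable def parabolicShear (a c₁ c₂ : ℝ) : ℝ × ℝ ≃ᵐ ℝ × ℝ where
  toFun q := (q.1 + c₁, q.2 + (c₂ + q.1 ^ 2 / a))
  invFun q := (q.1 - c₁, q.2 - (c₂ + (q.1 - c₁) ^ 2 / a))
  left_inv q := by ext <;> dsimp <;> ring
  right_inv q := by ext <;> dsimp <;> ring
  measurable_toFun := by simp only [Equiv.coe_fn_mk]; fun_prop
  measurable_invFun := by simp only [Equiv.coe_fn_symm_mk]; fun_prop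

theorem measurePreserving_parabolicShear (a c₁ c₂ : ℝ) :
    MeasurePreserving (parabolicShear a c₁ c₂) volume volume := by
  rw [Measure.volume_eq_prod]
  exact (measurePreserving_add_right volume c₁).skew_product
    (g := fun s u => u + (c₂ + s ^ 2 / a)) (by fun_prop)
    (.of_forall fun s => map_add_right_eq_self _ _)

theorem setIntegral_parabola_rpow_mul_exp {a d : ℝ} (ha : 0 < a) (hd : 0 < d)
    (b c c₁ c₂ : ℝ) :
    ∫ q : ℝ × ℝ in {q | 0 < a * (q.2 - c₂) - (q.1 - c₁) ^ 2},
        (a * (q.2 - c₂) - (q.1 - c₁) ^ 2) ^ ((b - 2) / 2) *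
          exp (-(c * (q.1 - c₁)) - d * (q.2 - c₂) / 2)
      = (2 * π / d) ^ ((1 : ℝ) / 2) * I1 b d * a ^ ((b - 1) / 2) *
          exp (c ^ 2 * a / (2 * d)) := by
  set S := {q : ℝ × ℝ | 0 < a * (q.2 - c₂) - (q.1 - c₁) ^ 2}
  have hS : MeasurableSet S := measurableSet_lt measurable_const (by fun_prop)
  have hfactor (q : ℝ × ℝ) :
      S.indicator (fun q => (a * (q.2 - c₂) - (q.1 - c₁) ^ 2) ^ ((b - 2) / 2) *
          exp (-(c * (q.1 - c₁)) - d * (q.2 - c₂) / 2)) (parabolicShear a c₁ c₂ q) =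
        a ^ ((b - 2) / 2) * exp (-(c * q.1) - d / (2 * a) * q.1 ^ 2) *
          (Set.Ioi 0).indicator (fun u => u ^ ((b - 2) / 2) * exp (-(d * u) / 2)) q.2 := by
    obtain ⟨s, u⟩ := q
    have hQ : a * (u + (c₂ + s ^ 2 / a) - c₂) - (s + c₁ - c₁) ^ 2 = a * u := by
      field_simp; ring
    have hexp : -(c * (s + c₁ - c₁)) - d * (u + (c₂ + s ^ 2 / a) - c₂) / 2 =
        (-(c * s) - d / (2 * a) * s ^ 2) + -(d * u) / 2 := by
      field_simp; ring
    simp only [parabolicShear, MeasurableEquiv.coe_mk, Equiv.coe_fn_mk, Set.indicator, S,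
      Set.mem_ofPred_eq, hQ, hexp, Set.mem_Ioi, mul_pos_iff_of_pos_left ha]
    split_ifs with hu
    · rw [mul_rpow ha.le hu.le, exp_add]; ring
    · rw [mul_zero]
  rw [← integral_indicator hS, ← (measurePreserving_parabolicShear a c₁ c₂).integral_comp']
  simp_rw [hfactor]
  rw [Measure.volume_eq_prod,
    integral_prod_mul (fun s => a ^ ((b - 2) / 2) * exp (-(c * s) - d / (2 * a) * s ^ 2))
      ((Set.Ioi 0).indicator fun u => u ^ ((b - 2) / 2) * exp (-(d * u) / 2)),
    integral_indicator measurableSet_Ioi, ← I1, integral_const_mul,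
    integral_exp_neg_mul_sq_sub_mul (by positivity)]
  have hsqrt : √(π / (d / (2 * a))) = (2 * π / d) ^ ((1 : ℝ) / 2) * a ^ ((1 : ℝ) / 2) := by
    rw [show π / (d / (2 * a)) = 2 * π / d * a by field_simp, sqrt_eq_rpow,
      mul_rpow (by positivity) ha.le]
  have hpow : a ^ ((b - 2) / 2) * a ^ ((1 : ℝ) / 2) = a ^ ((b - 1) / 2) := by
    rw [← rpow_add ha]; ring_nf
  rw [hsqrt, show c ^ 2 / (4 * (d / (2 * a))) = c ^ 2 * a / (2 * d) by field_simp; ring, ← hpow]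
  ring

theorem setIntegral_parabola_density {a d m : ℝ} (ha : 0 < a) (hd : 0 < d) (hm : 0 < m)
    (b c δ τ c₁ c₂ : ℝ) :
    ∫ q : ℝ × ℝ in {q | 0 < a * (q.2 - c₂) - (q.1 - c₁) ^ 2},
        (m * (a * (q.2 - c₂) - (q.1 - c₁) ^ 2)) ^ ((b - 2) / 2) *
          exp (-(1 / 2) * (τ + δ * a + 2 * c * (q.1 - c₁) + d * (q.2 - c₂)))
      = (2 * π / d) ^ ((1 : ℝ) / 2) * I1 b d * a ^ ((b - 1) / 2) *
          exp (-(1 / 2) * (δ - c ^ 2 / d) * a) * m ^ ((b - 2) / 2) * exp (-(1 / 2) * τ) := by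
  have hS : MeasurableSet {q : ℝ × ℝ | 0 < a * (q.2 - c₂) - (q.1 - c₁) ^ 2} :=
    measurableSet_lt measurable_const (by fun_prop)
  have hsplit (q : ℝ × ℝ) (hq : 0 < a * (q.2 - c₂) - (q.1 - c₁) ^ 2) :
      (m * (a * (q.2 - c₂) - (q.1 - c₁) ^ 2)) ^ ((b - 2) / 2) *
          exp (-(1 / 2) * (τ + δ * a + 2 * c * (q.1 - c₁) + d * (q.2 - c₂))) =
        m ^ ((b - 2) / 2) * exp (-(1 / 2) * τ) * exp (-(1 / 2) * δ * a) *
          ((a * (q.2 - c₂) - (q.1 - c₁) ^ 2) ^ ((b - 2) / 2) *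
            exp (-(c * (q.1 - c₁)) - d * (q.2 - c₂) / 2)) := by
    rw [mul_rpow hm.le hq.le,
      show -(1 / 2) * (τ + δ * a + 2 * c * (q.1 - c₁) + d * (q.2 - c₂)) =
        -(1 / 2) * τ + -(1 / 2) * δ * a + (-(c * (q.1 - c₁)) - d * (q.2 - c₂) / 2) by ring,
      exp_add, exp_add]
    ring
  have hexp : exp (-(1 / 2) * δ * a) * exp (c ^ 2 * a / (2 * d)) =
      exp (-(1 / 2) * (δ - c ^ 2 / d) * a) := by
    rw [← exp_add]; congr 1; field_simp; ring
  rw [setIntegral_congr_fun hS hsplit, integral_const_mul,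
    setIntegral_parabola_rpow_mul_exp ha hd, ← hexp]
  ring

namespace Matrix

open scoped ComplexOrder

theorem trace_mul_eq_of_eq_zero_off_pair {α R : Type*} [Fintype α] [CommRing R] {i j : α}
    (D X : Matrix α α R) (hij : i ≠ j)
    (hX : ∀ l m, (l ≠ i ∧ l ≠ j) ∨ (m ≠ i ∧ m ≠ j) → X l m = 0) :
    (D * X).trace = D i i * X i i + D i j * X j i + D j i * X i j + D j j * X j j := by
  have hrow (l : α) : ∑ m, D l m * X m l = D l i * X i l + D l j * X j l :=
    Fintype.sum_eq_add i j hij fun m hm => by rw [hX m l (.inl hm), mul_zero]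
  simp only [trace, diag, mul_apply, hrow]
  rw [Fintype.sum_eq_add i j hij fun l hl => by simp [hX _ _ (.inr hl)]]
  ring

variable {m n : Type*} [Fintype m] [Fintype n] [DecidableEq m] [DecidableEq n]

omit [Fintype m] [Fintype n] [DecidableEq m] [DecidableEq n] in
theorem posDef_submatrix_equiv_iff {R : Type*} [CommRing R] [PartialOrder R] [StarRing R]
    {M : Matrix n n R} (e : m ≃ n) :
    (M.submatrix e e).PosDef ↔ M.PosDef :=
  ⟨fun h => by simpa using h.submatrix e.symm.injective, fun h => h.submatrix e.injective⟩

theorem posDef_iff_posSemidef_and_det_ne_zero {𝕜 : Type*} [RCLike 𝕜] {A : Matrix n n 𝕜} :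
    A.PosDef ↔ A.PosSemidef ∧ A.det ≠ 0 :=
  ⟨fun h => ⟨h.posSemidef, h.det_pos.ne'⟩, fun h => h.1.posDef_iff_det_ne_zero.mpr h.2⟩

theorem posDef_fromBlocks₂₂_iff {𝕜 : Type*} [RCLike 𝕜] (A : Matrix m m 𝕜)
    (B : Matrix m n 𝕜) {D : Matrix n n 𝕜} (hD : D.PosDef) [Invertible D] :
    (fromBlocks A B Bᴴ D).PosDef ↔ (A - B * D⁻¹ * Bᴴ).PosDef := by
  rw [posDef_iff_posSemidef_and_det_ne_zero, posDef_iff_posSemidef_and_det_ne_zero,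
    PosDef.fromBlocks₂₂ A B hD, det_fromBlocks₂₂, invOf_eq_nonsing_inv, mul_ne_zero_iff,
    and_iff_right hD.det_pos.ne']

theorem posDef_fin_two_iff {a b c : ℝ} :
    !![a, b; b, c].PosDef ↔ 0 < a ∧ 0 < a * c - b ^ 2 := by
  refine ⟨fun h => ⟨by simpa using h.diag_pos (i := 0), by simpa [sq] using h.det_pos⟩,
    fun ⟨ha, hdet⟩ => .of_dotProduct_mulVec_pos ?_ fun x hx => ?_⟩
  · ext k l; fin_cases k <;> fin_cases l <;> simp
  simp only [dotProduct, mulVec, Fin.sum_univ_two, Pi.star_apply, star_trivial, cons_val',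
    cons_val_zero, cons_val_one, of_apply, empty_val', cons_val_fin_one]
  have hsq : a * (x 0 * (a * x 0 + b * x 1) + x 1 * (b * x 0 + c * x 1)) =
      (a * x 0 + b * x 1) ^ 2 + (a * c - b ^ 2) * x 1 ^ 2 := by ring
  refine (mul_pos_iff_of_pos_left ha).mp (hsq ▸ ?_)
  by_cases h1 : x 1 = 0
  · have h0 : x 0 ≠ 0 := fun h0 => hx (funext fun k => by fin_cases k <;> simp [h0, h1])
    simp only [h1, mul_zero, add_zero, ne_eq, OfNat.ofNat_ne_zero, not_false_eq_true, zero_pow]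
    positivity
  · positivity

variable {α R : Type*} [DecidableEq α] {i j : α}

abbrev PairCompl (i j : α) : Type _ := {x : α // x ≠ i ∧ x ≠ j}

def sumPairComplEquiv (hij : i ≠ j) : Fin 2 ⊕ PairCompl i j ≃ α where
  toFun := Sum.elim ![i, j] Subtype.val
  invFun y :=
    if h₁ : y = i then .inl 0 else if h₂ : y = j then .inl 1 else .inr ⟨y, h₁, h₂⟩
  left_inv := by
    rintro (k | ⟨x, hxi, hxj⟩)
    · fin_cases k <;> simp [hij.symm]
    · simp [hxi, hxj]
  right_inv y := by
    by_cases h₁ : y = i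
    · simp [h₁]
    · by_cases h₂ : y = j <;> simp [h₁, h₂, hij.symm]

theorem submatrix_sumPairComplEquiv (N : Matrix α α R) (hij : i ≠ j) :
    N.submatrix (sumPairComplEquiv hij) (sumPairComplEquiv hij) =
      fromBlocks (N.submatrix ![i, j] ![i, j])
        (N.submatrix ![i, j] (Subtype.val : PairCompl i j → α))
        (N.submatrix Subtype.val ![i, j]) (N.submatrix Subtype.val Subtype.val) := by
  ext (u | u) (v | v) <;> rfl

variable [Fintype α]

/-- The paper's `K¹_{ee}` for `e = {i, j}`. -/
noncomputable def pairSchurTerm [CommRing R] (N : Matrix α α R) (i j : α) :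
    Matrix (Fin 2) (Fin 2) R :=
  (N.submatrix ![i, j] Subtype.val : Matrix (Fin 2) (PairCompl i j) R) *
    (N.submatrix Subtype.val Subtype.val : Matrix (PairCompl i j) (PairCompl i j) R)⁻¹ *
    (N.submatrix Subtype.val ![i, j] : Matrix (PairCompl i j) (Fin 2) R)

theorem isSymm_pairSchurTerm [CommRing R] {N : Matrix α α R} (hN : N.IsSymm) :
    (pairSchurTerm N i j).IsSymm := by
  rw [IsSymm, pairSchurTerm, transpose_mul, transpose_mul, transpose_nonsing_inv,
    transpose_submatrix, transpose_submatrix, transpose_submatrix, hN.eq, Matrix.mul_assoc]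

theorem det_eq_det_mul_det_sub_pairSchurTerm [CommRing R] (N : Matrix α α R) (hij : i ≠ j)
    (hM : IsUnit (N.submatrix (Subtype.val : PairCompl i j → α) Subtype.val).det) :
    N.det = (N.submatrix (Subtype.val : PairCompl i j → α) Subtype.val).det *
      (N.submatrix ![i, j] ![i, j] - pairSchurTerm N i j).det := by
  let _ := invertibleOfIsUnitDet _ hM
  rw [← det_submatrix_equiv_self (sumPairComplEquiv hij), submatrix_sumPairComplEquiv,
    det_fromBlocks₂₂, invOf_eq_nonsing_inv, pairSchurTerm]

theorem posDef_iff_posDef_sub_pairSchurTerm {N : Matrix α α ℝ} (hN : N.IsSymm) (hij : i ≠ j)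
    (hM : (N.submatrix (Subtype.val : PairCompl i j → α) Subtype.val).PosDef) :
    N.PosDef ↔ (N.submatrix ![i, j] ![i, j] - pairSchurTerm N i j).PosDef := by
  let _ := invertibleOfIsUnitDet _ hM.det_pos.ne'.isUnit
  have hC : N.submatrix (Subtype.val : PairCompl i j → α) ![i, j] =
      (N.submatrix ![i, j] Subtype.val)ᴴ := by
    rw [conjTranspose_eq_transpose_of_trivial, transpose_submatrix, hN.eq]
  rw [← posDef_submatrix_equiv_iff (sumPairComplEquiv hij), submatrix_sumPairComplEquiv, hC,
    posDef_fromBlocks₂₂_iff _ _ hM, pairSchurTerm, hC]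

end Matrix

open Matrix

section Edge

variable {α R : Type*} [DecidableEq α] {i j : α}

/-- The matrix `K(s,t)` of the paper. -/
def updateEdge (K : Matrix α α R) (i j : α) (s t : R) : Matrix α α R := fun l m =>
  if l = j ∧ m = j then t
  else if (l = i ∧ m = j) ∨ (l = j ∧ m = i) then s
  else K l m

def replaceEdgeBlock (K : Matrix α α R) (i j : α) (A : Matrix (Fin 2) (Fin 2) R) :
    Matrix α α R := fun l m =>
  if l = i ∧ m = i then A 0 0
  else if l = i ∧ m = j then A 0 1
  else if l = j ∧ m = i then A 1 0
  else if l = j ∧ m = j then A 1 1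
  else K l m

variable {K : Matrix α α R} {s t : R}

theorem updateEdge_submatrix_pair (hij : i ≠ j) :
    (updateEdge K i j s t).submatrix ![i, j] ![i, j] = !![K i i, s; s, t] := by
  ext k l; fin_cases k <;> fin_cases l <;> simp [updateEdge, hij, hij.symm]

@[simp]
theorem updateEdge_submatrix_pairCompl_right {β : Type*} (ι : β → α) :
    (updateEdge K i j s t).submatrix ι (Subtype.val : PairCompl i j → α) =
      K.submatrix ι Subtype.val := by
  ext k ⟨x, hxi, hxj⟩; simp [updateEdge, hxi, hxj]

@[simp]
theorem updateEdge_submatrix_pairCompl_left {β : Type*} (ι : β → α) :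
    (updateEdge K i j s t).submatrix (Subtype.val : PairCompl i j → α) ι =
      K.submatrix Subtype.val ι := by
  ext ⟨x, hxi, hxj⟩ l; simp [updateEdge, hxi, hxj]

theorem isSymm_updateEdge (hK : K.IsSymm) : (updateEdge K i j s t).IsSymm := by
  ext l m
  simp only [transpose_apply, updateEdge]
  split_ifs <;> first | rfl | exact hK.apply _ _ | tauto

variable [Fintype α] [CommRing R]

theorem trace_mul_updateEdge {D : Matrix α α R} {A : Matrix (Fin 2) (Fin 2) R} (hij : i ≠ j)
    (hD : D j i = D i j) (hA : A 1 0 = A 0 1) :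
    (D * updateEdge K i j s t).trace = (D * replaceEdgeBlock K i j A).trace +
      D i i * (K i i - A 0 0) + 2 * D i j * (s - A 0 1) + D j j * (t - A 1 1) := by
  rw [add_assoc, add_assoc, ← sub_eq_iff_eq_add', ← trace_sub, ← Matrix.mul_sub,
    trace_mul_eq_of_eq_zero_off_pair _ _ hij]
  · simp [updateEdge, replaceEdgeBlock, hij, hij.symm, hD, hA]
    ring
  · rintro l m (⟨hli, hlj⟩ | ⟨hmi, hmj⟩) <;> simp [updateEdge, replaceEdgeBlock, *]

theorem pairSchurTerm_updateEdge :
    pairSchurTerm (updateEdge K i j s t) i j = pairSchurTerm K i j := by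
  simp [pairSchurTerm]

theorem sub_pairSchurTerm_updateEdge (hK : K.IsSymm) (hij : i ≠ j) :
    (updateEdge K i j s t).submatrix ![i, j] ![i, j] - pairSchurTerm (updateEdge K i j s t) i j =
      !![K i i - pairSchurTerm K i j 0 0, s - pairSchurTerm K i j 0 1;
        s - pairSchurTerm K i j 0 1, t - pairSchurTerm K i j 1 1] := by
  have hT := (isSymm_pairSchurTerm (i := i) (j := j) hK).apply 0 1
  rw [updateEdge_submatrix_pair hij, pairSchurTerm_updateEdge]
  ext k l; fin_cases k <;> fin_cases l <;> simp [hT]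

theorem det_updateEdge (hK : K.IsSymm) (hij : i ≠ j)
    (hM : IsUnit (K.submatrix (Subtype.val : PairCompl i j → α) Subtype.val).det) :
    (updateEdge K i j s t).det =
      (K.submatrix (Subtype.val : PairCompl i j → α) Subtype.val).det *
      ((K i i - pairSchurTerm K i j 0 0) * (t - pairSchurTerm K i j 1 1) -
        (s - pairSchurTerm K i j 0 1) ^ 2) := by
  rw [det_eq_det_mul_det_sub_pairSchurTerm _ hij (by simpa using hM),
    sub_pairSchurTerm_updateEdge hK hij, det_fin_two_of,
    updateEdge_submatrix_pairCompl_right]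
  ring

theorem posDef_updateEdge_iff {K : Matrix α α ℝ} {s t : ℝ} (hK : K.IsSymm) (hij : i ≠ j)
    (hM : (K.submatrix (Subtype.val : PairCompl i j → α) Subtype.val).PosDef)
    (ha : 0 < K i i - pairSchurTerm K i j 0 0) :
    (updateEdge K i j s t).PosDef ↔ 0 < (K i i - pairSchurTerm K i j 0 0) *
      (t - pairSchurTerm K i j 1 1) - (s - pairSchurTerm K i j 0 1) ^ 2 := by
  rw [posDef_iff_posDef_sub_pairSchurTerm (isSymm_updateEdge hK) hij (by simpa using hM),
    sub_pairSchurTerm_updateEdge hK hij, posDef_fin_two_iff, and_iff_right ha]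

end Edge

theorem gwishart_integrate_out_edge_general (p : ℕ)
    (b : ℝ)
    (D : Matrix (Fin p) (Fin p) ℝ) (hD : D.PosDef)
    (i j : Fin p) (hij : i ≠ j)
    (K : Matrix (Fin p) (Fin p) ℝ) (hKsymm : K.IsSymm)
    (hKsub : (K.submatrix (fun x : {x : Fin p // x ≠ i ∧ x ≠ j} => x.val)
      (fun x : {x : Fin p // x ≠ i ∧ x ≠ j} => x.val)).PosDef)
    (hkii : 0 <
      K i i -
        (K.submatrix ![i, j] (fun x : {x : Fin p // x ≠ i ∧ x ≠ j} => x.val) *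
          (K.submatrix (fun x : {x : Fin p // x ≠ i ∧ x ≠ j} => x.val)
            (fun x : {x : Fin p // x ≠ i ∧ x ≠ j} => x.val))⁻¹ *
          K.submatrix (fun x : {x : Fin p // x ≠ i ∧ x ≠ j} => x.val) ![i, j]) 0 0) :
    let Vee : {x : Fin p // x ≠ i ∧ x ≠ j} → Fin p := Subtype.val
    let K1ee : Matrix (Fin 2) (Fin 2) ℝ :=
      K.submatrix ![i, j] Vee * (K.submatrix Vee Vee)⁻¹ * K.submatrix Vee ![i, j]
    let K1 : Matrix (Fin p) (Fin p) ℝ := fun l m =>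
      if l = i ∧ m = i then K1ee 0 0
      else if l = i ∧ m = j then K1ee 0 1
      else if l = j ∧ m = i then K1ee 1 0
      else if l = j ∧ m = j then K1ee 1 1
      else K l m
    let Kst : ℝ → ℝ → Matrix (Fin p) (Fin p) ℝ := fun s t l m =>
      if l = j ∧ m = j then t
      else if (l = i ∧ m = j) ∨ (l = j ∧ m = i) then s
      else K l m
    (∫ q in {q : ℝ × ℝ | (Kst q.1 q.2).PosDef},
        (Kst q.1 q.2).det ^ ((b - 2) / 2) *
          Real.exp (-(1 / 2) * (D * Kst q.1 q.2).trace))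
      = (2 * π / D j j) ^ ((1 : ℝ) / 2) * I1 b (D j j) *
          (K i i - K1ee 0 0) ^ ((b - 1) / 2) *
          Real.exp (-(1 / 2) * (D i i - D i j ^ 2 / D j j) * (K i i - K1ee 0 0)) *
          (K.submatrix Vee Vee).det ^ ((b - 2) / 2) *
          Real.exp (-(1 / 2) * (D * K1).trace) := by
  intro Vee K1ee K1 Kst
  have hD_symm : D j i = D i j := by simpa using hD.1.apply i j
  have hK1ee_symm : K1ee 1 0 = K1ee 0 1 := (isSymm_pairSchurTerm hKsymm).apply 0 1
  simp_rw [show Kst = updateEdge K i j from rfl, show K1 = replaceEdgeBlock K i j K1ee from rfl,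
    posDef_updateEdge_iff hKsymm hij hKsub hkii,
    det_updateEdge hKsymm hij hKsub.det_pos.ne'.isUnit,
    trace_mul_updateEdge hij hD_symm hK1ee_symm]
  exact setIntegral_parabola_density hkii hD.diag_pos hKsub.det_pos _ _ _ _ _ _

/-- Integrating the entries `(k_{ij}, k_{jj})` out of the G-Wishart density
(equation (6) of the paper): the double integral over the region where `K(s,t)` is
positive definite of the unnormalized G-Wishart density equals
`J(b, D_{ee}, K) · det(K_{V∖e,V∖e})^((b−2)/2) · exp(−tr(D·K¹)/2)`. -/
theorem gwishart_integrate_out_edge (p : ℕ) (hp : 3 ≤ p)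
    (b : ℝ) (hb : 2 < b)
    (D : Matrix (Fin p) (Fin p) ℝ) (hD : D.PosDef)
    (i j : Fin p) (hij : i ≠ j)
    (K : Matrix (Fin p) (Fin p) ℝ) (hKsymm : K.IsSymm)
    (hKsub : (K.submatrix (fun x : {x : Fin p // x ≠ i ∧ x ≠ j} => x.val)
      (fun x : {x : Fin p // x ≠ i ∧ x ≠ j} => x.val)).PosDef)
    (hkii : 0 <
      K i i -
        (K.submatrix ![i, j] (fun x : {x : Fin p // x ≠ i ∧ x ≠ j} => x.val) *
          (K.submatrix (fun x : {x : Fin p // x ≠ i ∧ x ≠ j} => x.val)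
            (fun x : {x : Fin p // x ≠ i ∧ x ≠ j} => x.val))⁻¹ *
          K.submatrix (fun x : {x : Fin p // x ≠ i ∧ x ≠ j} => x.val) ![i, j]) 0 0) :
    let Vee : {x : Fin p // x ≠ i ∧ x ≠ j} → Fin p := Subtype.val
    let K1ee : Matrix (Fin 2) (Fin 2) ℝ :=
      K.submatrix ![i, j] Vee * (K.submatrix Vee Vee)⁻¹ * K.submatrix Vee ![i, j]
    let K1 : Matrix (Fin p) (Fin p) ℝ := fun l m =>
      if l = i ∧ m = i then K1ee 0 0
      else if l = i ∧ m = j then K1ee 0 1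
      else if l = j ∧ m = i then K1ee 1 0
      else if l = j ∧ m = j then K1ee 1 1
      else K l m
    let Kst : ℝ → ℝ → Matrix (Fin p) (Fin p) ℝ := fun s t l m =>
      if l = j ∧ m = j then t
      else if (l = i ∧ m = j) ∨ (l = j ∧ m = i) then s
      else K l m
    (∫ q in {q : ℝ × ℝ | (Kst q.1 q.2).PosDef},
        (Kst q.1 q.2).det ^ ((b - 2) / 2) *
          Real.exp (-(1 / 2) * (D * Kst q.1 q.2).trace))
      = (2 * π / D j j) ^ ((1 : ℝ) / 2) * I1 b (D j j) *
          (K i i - K1ee 0 0) ^ ((b - 1) / 2) *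
          Real.exp (-(1 / 2) * (D i i - D i j ^ 2 / D j j) * (K i i - K1ee 0 0)) *
          (K.submatrix Vee Vee).det ^ ((b - 2) / 2) *
          Real.exp (-(1 / 2) * (D * K1).trace) :=
  gwishart_integrate_out_edge_general p b D hD i j hij K hKsymm hKsub hkii
end

section
/- Let p ≥ 3, b > 2, let D be a real symmetric positive definite p×p matrix, let K be a real symmetric positive definite p×p matrix, let i ≠ j in V = {1,…,p}, e = {i,j}. Let K¹_{ee} := K_{e,V∖e} · (K_{V∖e,V∖e})^{−1} · K_{V∖e,e} with (i,i) entry k¹_{ii}, and let K¹ be K with its e×e block replaced by K¹_{ee}. Let K̃ be K with the (i,j) and (j,i) entries set to 0, let c := K̃_{j,V∖{j}} · (K_{V∖{j},V∖{j}})^{−1} · K̃_{V∖{j},j}, and let K⁰ be K̃ with the (j,j) entry set to c. Then the ratio [I₁(b, d_{jj}) · det(K⁰_{V∖{j},V∖{j}})^((b−2)/2) · exp(−(1/2)·tr(D·K⁰))] / [(2π/d_{jj})^(1/2) · I₁(b, d_{jj}) · (k_{ii} − k¹_{ii})^((b−1)/2) · exp(−(1/2)·(d_{ii} − d_{ij}²/d_{jj})·(k_{ii}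 − k¹_{ii})) · det(K_{V∖e,V∖e})^((b−2)/2) · exp(−(1/2)·tr(D·K¹))] equals H(K, D, e) := (d_{jj} / (2π·(k_{ii} − k¹_{ii})))^(1/2) · exp{−(1/2)·[tr(D·(K⁰ − K¹)) − (d_{ii} − d_{ij}²/d_{jj})·(k_{ii} − k¹_{ii})]}. -/
open MeasureTheory Matrix Real

theorem I1_eq_rpow_mul_Gamma {b d : ℝ} (hb : 0 < b) (hd : 0 < d) :
    I1 b d = (d / 2) ^ (-(b / 2)) * Gamma (b / 2) := by
  have h := integral_rpow_mul_exp_neg_mul_rpow one_pos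
    (show -1 < (b - 2) / 2 by linarith) (show 0 < d / 2 by positivity)
  rw [show (b - 2) / 2 + 1 = b / 2 by ring] at h
  simp only [rpow_one, div_one, mul_one] at h
  rw [I1, ← h]
  refine setIntegral_congr_fun measurableSet_Ioi fun t _ => ?_
  ring_nf

theorem I1_pos {b d : ℝ} (hb : 0 < b) (hd : 0 < d) : 0 < I1 b d := by
  rw [I1_eq_rpow_mul_Gamma hb hd]
  exact mul_pos (by positivity) (Gamma_pos_of_pos (by positivity))

def Equiv.unitSumSubtypeNeAnd {n : Type*} [DecidableEq n] {P : n → Prop} {i : n} (hi : P i) :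
    Unit ⊕ {x // x ≠ i ∧ P x} ≃ {x // P x} where
  toFun := Sum.elim (fun _ => ⟨i, hi⟩) (fun a => ⟨a.1, a.2.2⟩)
  invFun a := if h : a.1 = i then Sum.inl () else Sum.inr ⟨a.1, h, a.2⟩
  left_inv := by
    rintro (_ | a)
    · simp
    · simp [a.2.1]
  right_inv := by
    rintro ⟨a, ha⟩
    by_cases h : a = i
    · subst h; simp
    · simp [h]

namespace Matrix

variable {n R : Type*} [Fintype n] [DecidableEq n] [CommRing R]

theorem det_submatrix_subtype_eq_mul_schur {P : n → Prop} [DecidablePred P] {i : n} (hi : P i)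
    (K : Matrix n n R)
    (hK : IsUnit (K.submatrix (Subtype.val : {x // x ≠ i ∧ P x} → n) Subtype.val).det) :
    (K.submatrix (Subtype.val : {x // P x} → n) Subtype.val).det =
      (K.submatrix (Subtype.val : {x // x ≠ i ∧ P x} → n) Subtype.val).det *
        (K i i - (fun x : {x // x ≠ i ∧ P x} => K i x) ⬝ᵥ
          ((K.submatrix Subtype.val Subtype.val)⁻¹ *ᵥ fun x : {x // x ≠ i ∧ P x} => K x i)) := by
  set A := K.submatrix (Subtype.val : {x // x ≠ i ∧ P x} → n) Subtype.val
  let _ := A.invertibleOfIsUnitDet hK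
  have hblocks : (K.submatrix Subtype.val Subtype.val).submatrix
      (Equiv.unitSumSubtypeNeAnd hi) (Equiv.unitSumSubtypeNeAnd hi) =
      fromBlocks (of fun _ _ => K i i) (of fun _ (x : {x // x ≠ i ∧ P x}) => K i x)
        (of fun (x : {x // x ≠ i ∧ P x}) _ => K x i) A := by
    ext (_ | _) (_ | _) <;> rfl
  rw [← det_submatrix_equiv_self (Equiv.unitSumSubtypeNeAnd hi), hblocks, det_fromBlocks₂₂,
    det_unique (n := Unit), invOf_eq_nonsing_inv, Matrix.mul_assoc]
  rfl

end Matrix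

theorem gwishart_factor_ratio {I Δ a d w t₀ t₁ b : ℝ} (hI : I ≠ 0) (hΔ : 0 < Δ) (ha : 0 < a)
    (hd : 0 < d) :
    (I * (Δ * a) ^ ((b - 2) / 2) * exp (-(1 / 2) * t₀)) /
      ((2 * π / d) ^ ((1 : ℝ) / 2) * I * a ^ ((b - 1) / 2) *
        exp (-(1 / 2) * w * a) * Δ ^ ((b - 2) / 2) * exp (-(1 / 2) * t₁))
      = (d / (2 * π * a)) ^ ((1 : ℝ) / 2) * exp (-(1 / 2) * ((t₀ - t₁) - w * a)) := by
  have hpow : (Δ * a) ^ ((b - 2) / 2) =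
      Δ ^ ((b - 2) / 2) * a ^ ((b - 1) / 2) / a ^ ((1 : ℝ) / 2) := by
    rw [mul_rpow hΔ.le ha.le, mul_div_assoc, ← rpow_sub ha]
    ring_nf
  have hsqrt : (d / (2 * π * a)) ^ ((1 : ℝ) / 2) =
      ((2 * π / d) ^ ((1 : ℝ) / 2) * a ^ ((1 : ℝ) / 2))⁻¹ := by
    rw [← mul_rpow (by positivity) ha.le, ← inv_rpow (by positivity)]
    field_simp
  have hexp : exp (-(1 / 2) * t₀) =
      exp (-(1 / 2) * ((t₀ - t₁) - w * a)) * exp (-(1 / 2) * w * a) * exp (-(1 / 2) * t₁) := by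
    rw [← exp_add, ← exp_add]
    ring_nf
  have hπd : 0 < (2 * π / d) ^ ((1 : ℝ) / 2) := by positivity
  have ha_sqrt : 0 < a ^ ((1 : ℝ) / 2) := by positivity
  have ha_pow : 0 < a ^ ((b - 1) / 2) := by positivity
  have hΔ_pow : 0 < Δ ^ ((b - 2) / 2) := by positivity
  rw [hpow, hsqrt, hexp]
  field_simp

theorem gwishart_ratio_eq_H_general (p : ℕ)
    (b : ℝ) (hb : 2 < b)
    (D : Matrix (Fin p) (Fin p) ℝ) (hD : D.PosDef)
    (K : Matrix (Fin p) (Fin p) ℝ) (hK : K.PosDef)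
    (i j : Fin p) (hij : i ≠ j) :
    let Vee : {x : Fin p // x ≠ i ∧ x ≠ j} → Fin p := Subtype.val
    let Vj : {x : Fin p // x ≠ j} → Fin p := Subtype.val
    let K1ee : Matrix (Fin 2) (Fin 2) ℝ :=
      K.submatrix ![i, j] Vee * (K.submatrix Vee Vee)⁻¹ * K.submatrix Vee ![i, j]
    let K1 : Matrix (Fin p) (Fin p) ℝ := fun l m =>
      if l = i ∧ m = i then K1ee 0 0
      else if l = i ∧ m = j then K1ee 0 1
      else if l = j ∧ m = i then K1ee 1 0
      else if l = j ∧ m = j then K1ee 1 1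
      else K l m
    let Ktil : Matrix (Fin p) (Fin p) ℝ := fun l m =>
      if (l = i ∧ m = j) ∨ (l = j ∧ m = i) then 0 else K l m
    let c : ℝ := (fun x : {x : Fin p // x ≠ j} => Ktil j x.val) ⬝ᵥ
      ((K.submatrix Vj Vj)⁻¹ *ᵥ fun x : {x : Fin p // x ≠ j} => Ktil x.val j)
    let K0 : Matrix (Fin p) (Fin p) ℝ := fun l m =>
      if l = j ∧ m = j then c else Ktil l m
    (I1 b (D j j) * (K0.submatrix Vj Vj).det ^ ((b - 2) / 2) *
        Real.exp (-(1 / 2) * (D * K0).trace)) /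
      ((2 * π / D j j) ^ ((1 : ℝ) / 2) * I1 b (D j j) *
        (K i i - K1ee 0 0) ^ ((b - 1) / 2) *
        Real.exp (-(1 / 2) * (D i i - D i j ^ 2 / D j j) * (K i i - K1ee 0 0)) *
        (K.submatrix Vee Vee).det ^ ((b - 2) / 2) *
        Real.exp (-(1 / 2) * (D * K1).trace))
      = (D j j / (2 * π * (K i i - K1ee 0 0))) ^ ((1 : ℝ) / 2) *
          Real.exp (-(1 / 2) *
            ((D * (K0 - K1)).trace -
              (D i i - D i j ^ 2 / D j j) * (K i i - K1ee 0 0))) := by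
  intro Vee Vj K1ee K1 Ktil c K0
  have hVee : (K.submatrix Vee Vee).PosDef := hK.submatrix Subtype.val_injective
  have hVj : (K.submatrix Vj Vj).PosDef := hK.submatrix Subtype.val_injective
  have hK1ee : K1ee 0 0 = (fun x : {x // x ≠ i ∧ x ≠ j} => K i x) ⬝ᵥ
      ((K.submatrix Vee Vee)⁻¹ *ᵥ fun x : {x // x ≠ i ∧ x ≠ j} => K x i) := by
    simp only [K1ee, Matrix.mul_assoc]
    rfl
  have hdet : (K.submatrix Vj Vj).det = (K.submatrix Vee Vee).det * (K i i - K1ee 0 0) := by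
    rw [hK1ee]
    exact det_submatrix_subtype_eq_mul_schur (P := (· ≠ j)) hij K hVee.det_pos.ne'.isUnit
  have hschur : 0 < K i i - K1ee 0 0 :=
    pos_of_mul_pos_right (hdet ▸ hVj.det_pos) hVee.det_pos.le
  have hK0 : K0.submatrix Vj Vj = K.submatrix Vj Vj := by
    ext l m
    show K0 l m = K l m
    simp [K0, Ktil, l.2, m.2]
  have htr : (D * (K0 - K1)).trace = (D * K0).trace - (D * K1).trace := by
    rw [Matrix.mul_sub, trace_sub]
  rw [hK0, hdet, htr]
  exact gwishart_factor_ratio (I1_pos (by linarith) hD.diag_pos).ne' hVee.det_pos hschur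
    hD.diag_pos

/-- The ratio of the integrated-out G-Wishart factors for the graphs `G^{−e}` and `G`
collapses to the explicit function `H(K,D,e)` (equations (7)–(8) of the paper). -/
theorem gwishart_ratio_eq_H (p : ℕ) (hp : 3 ≤ p)
    (b : ℝ) (hb : 2 < b)
    (D : Matrix (Fin p) (Fin p) ℝ) (hD : D.PosDef)
    (K : Matrix (Fin p) (Fin p) ℝ) (hK : K.PosDef)
    (i j : Fin p) (hij : i ≠ j) :
    let Vee : {x : Fin p // x ≠ i ∧ x ≠ j} → Fin p := Subtype.val
    let Vj : {x : Fin p // x ≠ j} → Fin p := Subtype.val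
    let K1ee : Matrix (Fin 2) (Fin 2) ℝ :=
      K.submatrix ![i, j] Vee * (K.submatrix Vee Vee)⁻¹ * K.submatrix Vee ![i, j]
    let K1 : Matrix (Fin p) (Fin p) ℝ := fun l m =>
      if l = i ∧ m = i then K1ee 0 0
      else if l = i ∧ m = j then K1ee 0 1
      else if l = j ∧ m = i then K1ee 1 0
      else if l = j ∧ m = j then K1ee 1 1
      else K l m
    let Ktil : Matrix (Fin p) (Fin p) ℝ := fun l m =>
      if (l = i ∧ m = j) ∨ (l = j ∧ m = i) then 0 else K l m
    let c : ℝ := (fun x : {x : Fin p // x ≠ j} => Ktil j x.val) ⬝ᵥ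
      ((K.submatrix Vj Vj)⁻¹ *ᵥ fun x : {x : Fin p // x ≠ j} => Ktil x.val j)
    let K0 : Matrix (Fin p) (Fin p) ℝ := fun l m =>
      if l = j ∧ m = j then c else Ktil l m
    (I1 b (D j j) * (K0.submatrix Vj Vj).det ^ ((b - 2) / 2) *
        Real.exp (-(1 / 2) * (D * K0).trace)) /
      ((2 * π / D j j) ^ ((1 : ℝ) / 2) * I1 b (D j j) *
        (K i i - K1ee 0 0) ^ ((b - 1) / 2) *
        Real.exp (-(1 / 2) * (D i i - D i j ^ 2 / D j j) * (K i i - K1ee 0 0)) *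
        (K.submatrix Vee Vee).det ^ ((b - 2) / 2) *
        Real.exp (-(1 / 2) * (D * K1).trace))
      = (D j j / (2 * π * (K i i - K1ee 0 0))) ^ ((1 : ℝ) / 2) *
          Real.exp (-(1 / 2) *
            ((D * (K0 - K1)).trace -
              (D i i - D i j ^ 2 / D j j) * (K i i - K1ee 0 0))) :=
  gwishart_ratio_eq_H_general p b hb D hD K hK i j hij
end

section
/- Let p ≥ 2 and let G = (V,E) be a graph on V = {1,…,p} with edge set E ⊆ W := {(i,j) : 1 ≤ i < j ≤ p}, and let Ē := W ∖ E denote the non-edges. Identify a point (κ,θ) ∈ ℝ^p × ℝ^E with the symmetric p×p matrix K having diagonal entries κ, entries θ_e at the positions of edges e ∈ E, and zeros elsewhere; Lebesgue measure is used on ℝ^p × ℝ^E. For e ∈ Ē, write G^{+e} = (V, E ∪ {e}); let drop_e : ℝ^p × ℝ^{E∪{e}} → ℝ^p × ℝ^E delete the coordinate θ_e, and for (κ,θ) ∈ ℝ^p × ℝ^E and t ∈ ℝ let ins_e(κ,θ,t) ∈ ℝ^p × ℝ^{E∪{e}} insert t at coordinate e. Suppose measurable nonnegative functions p_G on ℝ^p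 × ℝ^E, p_{G^{+e}} on ℝ^p × ℝ^{E∪{e}}, β_e on ℝ^p × ℝ^E, δ_e on ℝ^p × ℝ^{E∪{e}}, and b_e : ℝ × (ℝ^p × ℝ^{E∪{e}}) → [0,∞) satisfy: (i) for every e ∈ Ē and every K⁺ = (κ,θ⁺) ∈ ℝ^p × ℝ^{E∪{e}}, the pointwise relation δ_e(K⁺)·p_{G^{+e}}(K⁺) = β_e(drop_e(K⁺))·b_e(θ⁺_e; K⁺)·p_G(drop_e(K⁺)); and (ii) for every e ∈ Ē and every K ∈ ℝ^p × ℝ^E, ∫_ℝ b_e(t; ins_e(K,t)) dt = 1 (b_e is a probability density for the new entry). Then for every measurable set F ⊆ ℝ^p × ℝ^E: ∫_F Σ_{e∈Ē} β_e(K)·p_G(K) dK = Σ_{e∈Ē} ∫_{ℝ^p × ℝ^{E∪{e}}} δ_e(K⁺) · 1_F(drop_e(K⁺)) · p_{G^{+e}}(K⁺) dK⁺. -/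
/-! For a non-edge `e`, inserting the coordinate `θ_e` identifies `ℝ × (ℝ^p × ℝ^E)` with
`ℝ^p × ℝ^{E∪{e}}` as measure spaces. Pulled back along this identification, the balance relation
factors the death flow density into `β_e p_G` on the small space times `b_e` in the new
coordinate, and by Tonelli integrating out that coordinate contributes a factor `1`, leaving the
birth flow of `e` out of `F`. Summing over `e` gives the claim. -/

open MeasureTheory ENNReal

/-- Delete the coordinate `θ_e` from a point of `ℝ^p × ℝ^{E∪{e}}`. -/
def dropI (p : ℕ) (E : Finset (Fin p × Fin p)) (e : Fin p × Fin p)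
    (x : (Fin p → ℝ) × ({q // q ∈ insert e E} → ℝ)) :
    (Fin p → ℝ) × ({q // q ∈ E} → ℝ) :=
  (x.1, fun q => x.2 ⟨q.val, Finset.mem_insert_of_mem q.prop⟩)

/-- Insert the value `t` at coordinate `e` into a point of `ℝ^p × ℝ^E`. -/
def insI (p : ℕ) (E : Finset (Fin p × Fin p)) (e : Fin p × Fin p)
    (x : (Fin p → ℝ) × ({q // q ∈ E} → ℝ)) (t : ℝ) :
    (Fin p → ℝ) × ({q // q ∈ insert e E} → ℝ) :=
  (x.1, fun q =>
    if h : q.val = e then t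
    else x.2 ⟨q.val, (Finset.mem_insert.mp q.prop).resolve_left h⟩)

namespace MeasurableEquiv

variable {α β γ : Type*} [MeasurableSpace α] [MeasurableSpace β] [MeasurableSpace γ]

def prodLeftComm : α × β × γ ≃ᵐ β × α × γ :=
  prodAssoc.symm.trans <| (prodComm.prodCongr (refl γ)).trans prodAssoc

theorem measurePreserving_prodLeftComm (μ : Measure α) (ν : Measure β) (ρ : Measure γ)
    [SFinite μ] [SFinite ν] [SFinite ρ] :
    MeasurePreserving prodLeftComm (μ.prod (ν.prod ρ)) (ν.prod (μ.prod ρ)) :=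
  (measurePreserving_prodAssoc ν μ ρ).comp <|
    (Measure.measurePreserving_swap.prod (.id ρ)).comp (measurePreserving_prodAssoc μ ν ρ).symm

variable {ι : Type*} [DecidableEq ι] {s : Finset ι} {a : ι}

def prodPiInsert (ha : a ∉ s) : β × ({q // q ∈ s} → β) ≃ᵐ ({q // q ∈ insert a s} → β) :=
  prodComm.trans <| (piOptionEquivProd fun _ => β).symm.trans <|
    piCongrLeft (fun _ => β) (Finset.subtypeInsertEquivOption ha).symm

theorem prodPiInsert_apply (ha : a ∉ s) (t : β) (f : {q // q ∈ s} → β)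
    (q : {q // q ∈ insert a s}) :
    prodPiInsert ha (t, f) q =
      if h : q.1 = a then t else f ⟨q.1, (Finset.mem_insert.mp q.2).resolve_left h⟩ := by
  simp only [prodPiInsert, piOptionEquivProd, Equiv.optionEquivSumPUnit, Equiv.symm_mk,
    Equiv.coe_fn_mk, Sum.elim_inl, Sum.elim_inr, piUnique, PUnit.default_eq_unit, trans_symm,
    symm_symm, Finset.subtypeInsertEquivOption, trans_apply, coe_piCongrLeft,
    Equiv.piCongrLeft_apply, eq_rec_constant]
  split_ifs <;> rfl

theorem measurePreserving_prodPiInsert (ha : a ∉ s) (μ : Measure β) [SigmaFinite μ] :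
    MeasurePreserving (prodPiInsert ha) (μ.prod (Measure.pi fun _ => μ))
      (Measure.pi fun _ => μ) :=
  (measurePreserving_piCongrLeft (fun _ => μ) _).comp <|
    MeasurePreserving.comp
      ⟨(piOptionEquivProd _).symm.measurable, Measure.pi_map_piOptionEquivProd fun _ => μ⟩
      Measure.measurePreserving_swap

end MeasurableEquiv

theorem lintegral_mul_indicator_comp_eq_setLIntegral {T X Y : Type*} [MeasurableSpace T]
    [MeasurableSpace X] [MeasurableSpace Y] {ν : Measure T} {μ : Measure X} {ρ : Measure Y}
    [SFinite ν] [SFinite μ] (ins : T × X ≃ᵐ Y) (hins : MeasurePreserving ins (ν.prod μ) ρ)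
    {drop : Y → X} (hdrop : ∀ z, drop (ins z) = z.2) {D : Y → ℝ≥0∞} {B : X → ℝ≥0∞}
    {k : T × X → ℝ≥0∞} (hB : Measurable B) (hk : Measurable k)
    (hD : ∀ z, D (ins z) = B z.2 * k z) (hk1 : ∀ x, ∫⁻ t, k (t, x) ∂ν = 1)
    {F : Set X} (hF : MeasurableSet F) :
    ∫⁻ y, D y * F.indicator (fun _ => 1) (drop y) ∂ρ = ∫⁻ x in F, B x ∂μ := by
  have hind : Measurable (F.indicator fun _ => (1 : ℝ≥0∞)) := measurable_const.indicator hF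
  calc ∫⁻ y, D y * F.indicator (fun _ => 1) (drop y) ∂ρ
      = ∫⁻ z, B z.2 * F.indicator (fun _ => 1) z.2 * k z ∂(ν.prod μ) := by
        rw [hins.lintegral_map_equiv]
        simp only [hD, hdrop, mul_right_comm]
    _ = ∫⁻ x, ∫⁻ t, B x * F.indicator (fun _ => 1) x * k (t, x) ∂ν ∂μ :=
        lintegral_prod_symm _ ((hB.comp measurable_snd).mul (hind.comp measurable_snd) |>.mul hk
          |>.aemeasurable)
    _ = ∫⁻ x, F.indicator B x ∂μ := by
        refine lintegral_congr fun x => ?_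
        rw [lintegral_const_mul _ (f := fun t => k (t, x)) (hk.comp measurable_prodMk_right), hk1,
          mul_one]
        by_cases hx : x ∈ F <;> simp [hx]
    _ = ∫⁻ x in F, B x ∂μ := lintegral_indicator hF B

section CoordinateInsertion

variable {p : ℕ} {E : Finset (Fin p × Fin p)} {e : Fin p × Fin p}

theorem dropI_insI (he : e ∉ E) (x : (Fin p → ℝ) × ({q // q ∈ E} → ℝ)) (t : ℝ) :
    dropI p E e (insI p E e x t) = x := by
  ext q
  · rfl
  · exact dif_neg fun h : q.1 = e => he (h ▸ q.2)

theorem insI_apply_self (x : (Fin p → ℝ) × ({q // q ∈ E} → ℝ)) (t : ℝ) :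
    (insI p E e x t).2 ⟨e, Finset.mem_insert_self e E⟩ = t :=
  dif_pos rfl

def insIEquiv (he : e ∉ E) :
    ℝ × (Fin p → ℝ) × ({q // q ∈ E} → ℝ) ≃ᵐ (Fin p → ℝ) × ({q // q ∈ insert e E} → ℝ) :=
  MeasurableEquiv.prodLeftComm.trans <|
    (MeasurableEquiv.refl _).prodCongr (MeasurableEquiv.prodPiInsert he)

theorem coe_insIEquiv (he : e ∉ E) : ⇑(insIEquiv he) = fun z => insI p E e z.2 z.1 :=
  funext fun z => Prod.ext rfl <| funext <| MeasurableEquiv.prodPiInsert_apply he z.1 z.2.2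

theorem measurePreserving_insIEquiv (he : e ∉ E) :
    MeasurePreserving (insIEquiv he) volume volume :=
  ((MeasurePreserving.id volume).prod
      (MeasurableEquiv.measurePreserving_prodPiInsert he volume)).comp
    (MeasurableEquiv.measurePreserving_prodLeftComm volume volume volume)

end CoordinateInsertion

theorem birth_side_detailed_balance_general (p : ℕ)
    (E Ebar : Finset (Fin p × Fin p))
    (hEbar : Ebar = (Finset.univ.filter (fun q : Fin p × Fin p => q.1 < q.2)) \ E)
    (pG : (Fin p → ℝ) × ({q // q ∈ E} → ℝ) → ℝ)
    (pGp : (e : Fin p × Fin p) → (Fin p → ℝ) × ({q // q ∈ insert e E} → ℝ) → ℝ)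
    (βe : (Fin p × Fin p) → (Fin p → ℝ) × ({q // q ∈ E} → ℝ) → ℝ)
    (δe : (e : Fin p × Fin p) → (Fin p → ℝ) × ({q // q ∈ insert e E} → ℝ) → ℝ)
    (be : (e : Fin p × Fin p) →
      ℝ × ((Fin p → ℝ) × ({q // q ∈ insert e E} → ℝ)) → ℝ)
    (hpG : Measurable pG) (hpG0 : ∀ x, 0 ≤ pG x)
    (hβ : ∀ e, Measurable (βe e)) (hβ0 : ∀ e x, 0 ≤ βe e x)
    (hδ0 : ∀ e x, 0 ≤ δe e x)
    (hbe : ∀ e, Measurable (be e))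
    (hbal : ∀ e ∈ Ebar, ∀ x : (Fin p → ℝ) × ({q // q ∈ insert e E} → ℝ),
      δe e x * pGp e x =
        βe e (dropI p E e x) * be e (x.2 ⟨e, Finset.mem_insert_self e E⟩, x) *
          pG (dropI p E e x))
    (hprob : ∀ e ∈ Ebar, ∀ x : (Fin p → ℝ) × ({q // q ∈ E} → ℝ),
      (∫⁻ t : ℝ, ENNReal.ofReal (be e (t, insI p E e x t))) = 1) :
    ∀ F : Set ((Fin p → ℝ) × ({q // q ∈ E} → ℝ)), MeasurableSet F →
      (∫⁻ x in F, ENNReal.ofReal ((∑ e ∈ Ebar, βe e x) * pG x))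
        = ∑ e ∈ Ebar, ∫⁻ y, ENNReal.ofReal (δe e y) *
            F.indicator (fun _ => (1 : ℝ≥0∞)) (dropI p E e y) *
            ENNReal.ofReal (pGp e y) := by
  intro F hF
  have hflow : ∀ e x, 0 ≤ βe e x * pG x := fun e x => mul_nonneg (hβ0 e x) (hpG0 x)
  have hB : ∀ e, Measurable fun x => ENNReal.ofReal (βe e x * pG x) :=
    fun e => ((hβ e).mul hpG).ennreal_ofReal
  calc (∫⁻ x in F, ENNReal.ofReal ((∑ e ∈ Ebar, βe e x) * pG x))
      = ∫⁻ x in F, ∑ e ∈ Ebar, ENNReal.ofReal (βe e x * pG x) := by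
        simp_rw [Finset.sum_mul, ENNReal.ofReal_sum_of_nonneg fun e _ => hflow e _]
    _ = ∑ e ∈ Ebar, ∫⁻ x in F, ENNReal.ofReal (βe e x * pG x) :=
        lintegral_finsetSum _ fun e _ => hB e
    _ = _ := Finset.sum_congr rfl fun e he => ?_
  have heE : e ∉ E := (Finset.mem_sdiff.mp (hEbar ▸ he)).2
  have hk : Measurable fun z : ℝ × _ => ENNReal.ofReal (be e (z.1, insI p E e z.2 z.1)) :=
    ((hbe e).comp (measurable_fst.prodMk
      (coe_insIEquiv heE ▸ (insIEquiv heE).measurable))).ennreal_ofReal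
  have hD : ∀ z,
      ENNReal.ofReal (δe e (insIEquiv heE z)) * ENNReal.ofReal (pGp e (insIEquiv heE z)) =
        ENNReal.ofReal (βe e z.2 * pG z.2) * ENNReal.ofReal (be e (z.1, insI p E e z.2 z.1)) := by
    rintro ⟨t, x⟩
    rw [coe_insIEquiv, ← ENNReal.ofReal_mul (hδ0 e _), hbal e he, insI_apply_self,
      dropI_insI heE, mul_right_comm, ENNReal.ofReal_mul (hflow e x)]
  rw [← lintegral_mul_indicator_comp_eq_setLIntegral (insIEquiv heE)
    (measurePreserving_insIEquiv heE) (drop := dropI p E e)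
    (D := fun y => ENNReal.ofReal (δe e y) * ENNReal.ofReal (pGp e y))
    (fun z => by rw [coe_insIEquiv, dropI_insI heE]) (hB e) hk hD (hprob e he) hF]
  exact lintegral_congr fun y => mul_right_comm _ _ _

/-- The birth-side detailed balance condition (equation (A.2) of the paper): if the
pointwise relation
`δ_e(K⁺)·p_{G^{+e}}(K⁺) = β_e(drop_e K⁺)·b_e(θ⁺_e; K⁺)·p_G(drop_e K⁺)` holds and each
birth proposal density `b_e` integrates to one, then for every measurable `F`, the flow
out of `F` due to births equals the flow into `F` due to deaths from the larger graphs
`G^{+e}`. -/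
theorem birth_side_detailed_balance (p : ℕ) (hp : 2 ≤ p)
    (E Ebar : Finset (Fin p × Fin p))
    (hEW : E ⊆ Finset.univ.filter (fun q : Fin p × Fin p => q.1 < q.2))
    (hEbar : Ebar = (Finset.univ.filter (fun q : Fin p × Fin p => q.1 < q.2)) \ E)
    (pG : (Fin p → ℝ) × ({q // q ∈ E} → ℝ) → ℝ)
    (pGp : (e : Fin p × Fin p) → (Fin p → ℝ) × ({q // q ∈ insert e E} → ℝ) → ℝ)
    (βe : (Fin p × Fin p) → (Fin p → ℝ) × ({q // q ∈ E} → ℝ) → ℝ)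
    (δe : (e : Fin p × Fin p) → (Fin p → ℝ) × ({q // q ∈ insert e E} → ℝ) → ℝ)
    (be : (e : Fin p × Fin p) →
      ℝ × ((Fin p → ℝ) × ({q // q ∈ insert e E} → ℝ)) → ℝ)
    (hpG : Measurable pG) (hpG0 : ∀ x, 0 ≤ pG x)
    (hpGp : ∀ e, Measurable (pGp e)) (hpGp0 : ∀ e x, 0 ≤ pGp e x)
    (hβ : ∀ e, Measurable (βe e)) (hβ0 : ∀ e x, 0 ≤ βe e x)
    (hδ : ∀ e, Measurable (δe e)) (hδ0 : ∀ e x, 0 ≤ δe e x)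
    (hbe : ∀ e, Measurable (be e)) (hbe0 : ∀ e x, 0 ≤ be e x)
    (hbal : ∀ e ∈ Ebar, ∀ x : (Fin p → ℝ) × ({q // q ∈ insert e E} → ℝ),
      δe e x * pGp e x =
        βe e (dropI p E e x) * be e (x.2 ⟨e, Finset.mem_insert_self e E⟩, x) *
          pG (dropI p E e x))
    (hprob : ∀ e ∈ Ebar, ∀ x : (Fin p → ℝ) × ({q // q ∈ E} → ℝ),
      (∫⁻ t : ℝ, ENNReal.ofReal (be e (t, insI p E e x t))) = 1) :
    ∀ F : Set ((Fin p → ℝ) × ({q // q ∈ E} → ℝ)), MeasurableSet F →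
      (∫⁻ x in F, ENNReal.ofReal ((∑ e ∈ Ebar, βe e x) * pG x))
        = ∑ e ∈ Ebar, ∫⁻ y, ENNReal.ofReal (δe e y) *
            F.indicator (fun _ => (1 : ℝ≥0∞)) (dropI p E e y) *
            ENNReal.ofReal (pGp e y) :=
  birth_side_detailed_balance_general p E Ebar hEbar pG pGp βe δe be hpG hpG0 hβ hβ0 hδ0 hbe hbal
    hprob
end
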